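/- arXiv:2402.03387 — 7 statements merged into one kernel-verified Lean document; each statement's English description precedes it below -/
import Mathlib

section
/- There exist a connected simple graph G on a finite vertex set V and a nonempty proper subset W ⊆ V such that the subgraph of G induced on W is connected, yet there is no valid DFS ordering v_1, …, v_n of G for which {v_1, …, v_{|W|}} = W. In other words, the family of DFS-induced subgraphs of a connected graph does not in general coincide with the family of all connected subgraphs. -/
/-- In the ordering `f` of the vertices of `G`, the vertex `f i` has a neighbor in `G`
outside the set `{f i' : i' < j}` of the first `j` visited vertices. -/
def HasNewNbr {V : Type*} (G : SimpleGraph V) {n : ℕ} (f : Fin n → V) (j : ℕ) (i : Fin n) :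
    Prop :=
  ∃ w : V, G.Adj (f i) w ∧ ∀ i' : Fin n, (i' : ℕ) < j → f i' ≠ w

/-- `f` is a valid DFS ordering of `G`: `f` is a bijective enumeration of the vertices, and
for every index `j ≥ 1` the vertex `f j` is adjacent in `G` to `f i`, where `i` is the largest
index below `j` such that `f i` has a neighbor in `G` outside the first `j` visited vertices. -/
def IsDFSOrder {V : Type*} (G : SimpleGraph V) {n : ℕ} (f : Fin n → V) : Prop :=
  Function.Bijective f ∧
  ∀ j : Fin n, 0 < (j : ℕ) →
    ∃ i : Fin n, (i : ℕ) < (j : ℕ) ∧ HasNewNbr G f (j : ℕ) i ∧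
      (∀ i' : Fin n, (i' : ℕ) < (j : ℕ) → HasNewNbr G f (j : ℕ) i' → (i' : ℕ) ≤ (i : ℕ)) ∧
      G.Adj (f i) (f j)

/-- The spider graph on `Fin 7`: center `0`, legs `0-1-4`, `0-2-5`, `0-3-6`. -/
def myAdj (a b : Fin 7) : Prop :=
  ((a.val, b.val) ∈ [(0,1),(0,2),(0,3),(1,4),(2,5),(3,6),
                     (1,0),(2,0),(3,0),(4,1),(5,2),(6,3)])

instance : DecidableRel myAdj := fun a b => by unfold myAdj; infer_instance

def myG : SimpleGraph (Fin 7) where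
  Adj := myAdj
  symm := by constructor; intro a b h; revert h; revert a b; decide
  loopless := by constructor; intro a h; revert h; revert a; decide

instance : DecidableRel myG.Adj := fun a b => by show Decidable (myAdj a b); infer_instance

/-- There are a connected graph `G` on a finite vertex set `V` and a nonempty
proper subset `W ⊆ V` inducing a connected subgraph, such that no valid DFS ordering of `G`
has `W` as its set of first `|W|` vertices. -/
theorem stmt_2 :
    ∃ (V : Type) (_ : Fintype V) (G : SimpleGraph V) (W : Set V),
      G.Connected ∧ W.Nonempty ∧ W ≠ Set.univ ∧ (G.induce W).Connected ∧
      ¬ ∃ f : Fin (Nat.card V) → V, IsDFSOrder G f ∧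
          {v : V | ∃ i : Fin (Nat.card V), (i : ℕ) < W.ncard ∧ f i = v} = W := by
  refine ⟨Fin 7, inferInstance, myG, {0,1,2,3}, ?_, ⟨0, by simp⟩, ?_, ?_, ?_⟩
  · -- connected
    rw [SimpleGraph.connected_iff]
    refine ⟨fun u v => ?_, ⟨0⟩⟩
    have h1 : myG.Adj 0 1 := by decide
    have h2 : myG.Adj 0 2 := by decide
    have h3 : myG.Adj 0 3 := by decide
    have h4 : myG.Adj 1 4 := by decide
    have h5 : myG.Adj 2 5 := by decide
    have h6 : myG.Adj 3 6 := by decide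
    have r : ∀ v : Fin 7, myG.Reachable 0 v := by
      intro v
      fin_cases v
      · rfl
      · exact h1.reachable
      · exact h2.reachable
      · exact h3.reachable
      · exact h1.reachable.trans h4.reachable
      · exact h2.reachable.trans h5.reachable
      · exact h3.reachable.trans h6.reachable
    exact (r u).symm.trans (r v)
  · -- not univ
    intro h
    have h4 : (4 : Fin 7) ∈ ({0,1,2,3} : Set (Fin 7)) := h ▸ Set.mem_univ _
    simp only [Set.mem_insert_iff, Set.mem_singleton_iff] at h4
    rcases h4 with h|h|h|h <;> exact absurd h (by decide)
  · -- induced subgraph connected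
    rw [SimpleGraph.connected_iff]
    have h0 : (0 : Fin 7) ∈ ({0,1,2,3} : Set (Fin 7)) := by simp
    refine ⟨fun u v => ?_, ⟨⟨0, h0⟩⟩⟩
    have r : ∀ v : ({0,1,2,3} : Set (Fin 7)), (myG.induce _).Reachable ⟨0, h0⟩ v := by
      rintro ⟨v, hv⟩
      simp only [Set.mem_insert_iff, Set.mem_singleton_iff] at hv
      rcases hv with rfl | rfl | rfl | rfl
      · rfl
      · exact SimpleGraph.Adj.reachable (by show myG.Adj 0 1; decide)
      · exact SimpleGraph.Adj.reachable (by show myG.Adj 0 2; decide)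
      · exact SimpleGraph.Adj.reachable (by show myG.Adj 0 3; decide)
    exact (r u).symm.trans (r v)
  · -- main negation: no DFS ordering has {0,1,2,3} as prefix
    rintro ⟨f, ⟨hbij, hdfs⟩, hset⟩
    have hN : Nat.card (Fin 7) = 7 := by simp

    have hW : ({0,1,2,3} : Set (Fin 7)).ncard = 4 := by
      rw [show ({0,1,2,3} : Set (Fin 7)) = ↑({0,1,2,3} : Finset (Fin 7)) by simp,
        Set.ncard_coe_finset]
      decide
    rw [hW] at hset
    let j0 : Fin (Nat.card (Fin 7)) := ⟨0, by rw [hN]; omega⟩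
    let j1 : Fin (Nat.card (Fin 7)) := ⟨1, by rw [hN]; omega⟩
    let j2 : Fin (Nat.card (Fin 7)) := ⟨2, by rw [hN]; omega⟩
    let j3 : Fin (Nat.card (Fin 7)) := ⟨3, by rw [hN]; omega⟩
    have v0 : (j0 : ℕ) = 0 := rfl
    have v1 : (j1 : ℕ) = 1 := rfl
    have v2 : (j2 : ℕ) = 2 := rfl
    have v3 : (j3 : ℕ) = 3 := rfl
    have hinj := hbij.1
    have hne : ∀ p q : Fin (Nat.card (Fin 7)), (p : ℕ) ≠ (q : ℕ) → f p ≠ f q := by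
      intro p q h hc
      exact h (congrArg Fin.val (hinj hc))
    have hval : ∀ i : Fin (Nat.card (Fin 7)), (i : ℕ) < 4 → f i = 0 ∨ f i = 1 ∨ f i = 2 ∨ f i = 3 := by
      intro i hi
      have : f i ∈ ({0,1,2,3} : Set (Fin 7)) := hset ▸ ⟨i, hi, rfl⟩
      simpa using this
    have hforce : ∀ jc jp : Fin (Nat.card (Fin 7)), (jp : ℕ) + 1 = (jc : ℕ) →
        HasNewNbr myG f (jc : ℕ) jp → myG.Adj (f jp) (f jc) := by
      intro jc jp hpc hnew
      obtain ⟨i, hi, -, hmax, hadj⟩ := hdfs jc (by omega)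
      have h1 := hmax jp (by omega) hnew
      have h2 : i = jp := Fin.ext (by omega)
      rwa [h2] at hadj
    have hnewleaf : ∀ (i : Fin (Nat.card (Fin 7))) (t : ℕ), t ≤ 4 →
        (f i = 1 ∨ f i = 2 ∨ f i = 3) → HasNewNbr myG f t i := by
      intro i t ht hleaf
      refine ⟨f i + 3, ?_, ?_⟩
      · rcases hleaf with h | h | h <;> rw [h] <;> decide
      · intro i' hi' heq
        rcases hval i' (by omega) with h | h | h | h <;> rcases hleaf with g | g | g <;>
          rw [h, g] at heq <;> exact absurd heq (by decide)
    have hidx2 : ∀ i' : Fin (Nat.card (Fin 7)), (i' : ℕ) < 2 → i' = j0 ∨ i' = j1 := by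
      intro i' h
      have : (i' : ℕ) = 0 ∨ (i' : ℕ) = 1 := by omega
      rcases this with h | h
      · exact Or.inl (Fin.ext h)
      · exact Or.inr (Fin.ext h)
    -- adjacency classification facts
    have hL0 : ∀ u v : Fin 7, myG.Adj u v → (u = 1 ∨ u = 2 ∨ u = 3) →
        (v = 0 ∨ v = 1 ∨ v = 2 ∨ v = 3) → v = 0 := by decide
    have hL0' : ∀ u v : Fin 7, myG.Adj u v → (v = 1 ∨ v = 2 ∨ v = 3) →
        (u = 0 ∨ u = 1 ∨ u = 2 ∨ u = 3) → u = 0 := by decide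
    have hL1 : ∀ u v : Fin 7, myG.Adj u v → v = 0 → (u = 1 ∨ u = 2 ∨ u = 3) := by decide
    have hL2 : ∀ u v : Fin 7, myG.Adj u v → u = 0 → (v = 1 ∨ v = 2 ∨ v = 3) := by decide
    -- step 1 : f j1 is adjacent to f j0
    have step1 : myG.Adj (f j0) (f j1) := by
      obtain ⟨i, hi, -, -, hadj⟩ := hdfs j1 (by rw [v1]; omega)
      rw [v1] at hi
      have h2 : i = j0 := Fin.ext (by omega)
      rwa [h2] at hadj
    rcases hval j1 (by rw [v1]; omega) with hb0 | hbleaf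
    · -- f j1 = 0, so f j0 is a leaf
      have haleaf : f j0 = 1 ∨ f j0 = 2 ∨ f j0 = 3 := hL1 _ _ step1 hb0
      have hnew2 : HasNewNbr myG f 2 j1 := by
        rcases haleaf with h | h | h
        · refine ⟨2, by rw [hb0]; decide, ?_⟩
          intro i' hi'
          rcases hidx2 i' hi' with rfl | rfl
          · rw [h]; decide
          · rw [hb0]; decide
        · refine ⟨1, by rw [hb0]; decide, ?_⟩
          intro i' hi'
          rcases hidx2 i' hi' with rfl | rfl
          · rw [h]; decide
          · rw [hb0]; decide
        · refine ⟨1, by rw [hb0]; decide, ?_⟩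
          intro i' hi'
          rcases hidx2 i' hi' with rfl | rfl
          · rw [h]; decide
          · rw [hb0]; decide
      have step2 : myG.Adj (f j1) (f j2) := hforce j2 j1 rfl hnew2
      have hcleaf : f j2 = 1 ∨ f j2 = 2 ∨ f j2 = 3 := hL2 _ _ step2 hb0
      have hnew3 : HasNewNbr myG f 3 j2 := hnewleaf j2 3 (by omega) hcleaf
      have step3 : myG.Adj (f j2) (f j3) := hforce j3 j2 rfl hnew3
      have hd0 : f j3 = 0 := hL0 _ _ step3 hcleaf (hval j3 (by rw [v3]; omega))
      exact hne j1 j3 (by rw [v1, v3]; omega) (by rw [hb0, hd0])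
    · -- f j1 is a leaf
      have hnew2 : HasNewNbr myG f 2 j1 := hnewleaf j1 2 (by omega) hbleaf
      have step2 : myG.Adj (f j1) (f j2) := hforce j2 j1 rfl hnew2
      have hc0 : f j2 = 0 := hL0 _ _ step2 hbleaf (hval j2 (by rw [v2]; omega))
      have ha0 : f j0 = 0 := hL0' _ _ step1 hbleaf (hval j0 (by rw [v0]; omega))
      exact hne j0 j2 (by rw [v0, v2]; omega) (by rw [ha0, hc0])
end

section
/- Let G be a connected simple graph on a finite vertex set V, let {u, v} be a bridge of G, let S be the vertex set of the connected component of u in the graph obtained from G by deleting {u, v}, and let T = V \ S (which is the component of v). Suppose u_1, …, u_k is a valid DFS ordering of the induced subgraph G[S] with u_1 = u, and v_1, …, v_m is a valid DFS ordering of the induced subgraph G[T] with v_1 = v. Then the sequence (v_1, u_1, …, u_k, v_2, …, v_m) is a valid DFS ordering of G. -/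
/-- Glue a DFS ordering `fS = (u_1, …, u_k)` of `G[S]` and a DFS ordering
`fT = (v_1, …, v_m)` of `G[T]` into the sequence `(v_1, u_1, …, u_k, v_2, …, v_m)`. -/
def glue {V : Type*} {S T : Set V} {k m : ℕ} (hk : 0 < k) (hm : 0 < m)
    (fS : Fin k → S) (fT : Fin m → T) : Fin (k + m) → V := fun i =>
  if h0 : (i : ℕ) = 0 then (fT ⟨0, hm⟩ : V)
  else if hik : (i : ℕ) ≤ k then (fS ⟨(i : ℕ) - 1, by omega⟩ : V)
  else (fT ⟨(i : ℕ) - k, by have := i.2; omega⟩ : V)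

section Aux

variable {V : Type*} {S T : Set V} {k m : ℕ} (hk : 0 < k) (hm : 0 < m)
  (fS : Fin k → S) (fT : Fin m → T)

lemma glue_zero (i : Fin (k + m)) (h : (i : ℕ) = 0) :
    glue hk hm fS fT i = (fT ⟨0, hm⟩ : V) := by
  simp [glue, h]

lemma glue_S (i : Fin (k + m)) (h0 : (i : ℕ) ≠ 0) (hik : (i : ℕ) ≤ k) :
    glue hk hm fS fT i = (fS ⟨(i : ℕ) - 1, by omega⟩ : V) := by
  simp [glue, h0, hik]

lemma glue_T (i : Fin (k + m)) (h : k < (i : ℕ)) :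
    glue hk hm fS fT i = (fT ⟨(i : ℕ) - k, by have := i.2; omega⟩ : V) := by
  have h0 : (i : ℕ) ≠ 0 := by omega
  simp [glue, h0, Nat.not_le.mpr h]

lemma glue_succS (i : Fin k) (h : (i : ℕ) + 1 < k + m) :
    glue hk hm fS fT ⟨(i : ℕ) + 1, h⟩ = (fS i : V) := by
  have h2 : (i : ℕ) + 1 ≤ k := i.2
  simp [glue, h2]

lemma glue_succT (i : Fin m) (hi : 0 < (i : ℕ)) (h : (i : ℕ) + k < k + m) :
    glue hk hm fS fT ⟨(i : ℕ) + k, h⟩ = (fT i : V) := by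
  have h1 : ¬((i : ℕ) + k = 0) := by omega
  have h2 : ¬((i : ℕ) + k ≤ k) := by omega
  simp [glue, h1, h2, hi.ne']

end Aux

/-- Let `{u, v}` be a bridge of a connected graph `G`, let `S` be the
component of `u` after deleting the bridge and `T = Sᶜ` (the component of `v`). Gluing a DFS
ordering `(u_1, …, u_k)` of `G[S]` starting at `u` and a DFS ordering `(v_1, …, v_m)` of
`G[T]` starting at `v` as `(v_1, u_1, …, u_k, v_2, …, v_m)` yields a valid DFS ordering
of `G`. -/
theorem stmt_3 {V : Type*} [Fintype V] (G : SimpleGraph V) (hG : G.Connected)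
    (u v : V) (hbr : G.IsBridge s(u, v))
    (S : Set V) (hS : S = {x : V | (G.deleteEdges {s(u, v)}).Reachable u x})
    (T : Set V) (hT : T = Sᶜ)
    {k m : ℕ} (hk : 0 < k) (hm : 0 < m)
    (fS : Fin k → S) (hfS : IsDFSOrder (G.induce S) fS)
    (hfSu : (fS ⟨0, hk⟩ : V) = u)
    (fT : Fin m → T) (hfT : IsDFSOrder (G.induce T) fT)
    (hfTv : (fT ⟨0, hm⟩ : V) = v) :
    IsDFSOrder G (glue hk hm fS fT) := by
  classical
  obtain ⟨huv, hnr⟩ : G.Adj u v ∧ ¬ (G.deleteEdges {s(u, v)}).Reachable u v :=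
    ⟨hbr.reachable_iff_adj.mp (hG.preconnected u v), SimpleGraph.isBridge_iff.mp hbr⟩
  have hnr' : ¬ (G.deleteEdges {s(u, v)}).Reachable u v := hnr
  have huS : u ∈ S := by rw [hS]; exact SimpleGraph.Reachable.refl u
  have hvS : v ∉ S := by rw [hS]; exact hnr'
  have hTS : ∀ x : V, x ∈ T ↔ x ∉ S := by intro x; rw [hT]; rfl
  have hcross : ∀ x y : V, x ∈ S → y ∉ S → G.Adj x y → x = u ∧ y = v := by
    intro x y hx hy hxy
    by_cases he : s(x, y) = s(u, v)
    · rw [Sym2.eq_iff] at he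
      rcases he with ⟨h1, h2⟩ | ⟨h1, h2⟩
      · exact ⟨h1, h2⟩
      · subst h2; exact absurd huS hy
    · exfalso
      apply hy
      rw [hS] at hx ⊢
      exact hx.trans (SimpleGraph.Adj.reachable
        (SimpleGraph.deleteEdges_adj.mpr ⟨hxy, by simpa using he⟩))
  have hfSmem : ∀ i : Fin k, ((fS i : V)) ∈ S := fun i => (fS i).2
  have hfTmem : ∀ i : Fin m, ((fT i : V)) ∉ S := fun i => (hTS _).mp (fT i).2
  have hfSi : ∀ a b : Fin k, (fS a : V) = (fS b : V) → a = b :=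
    fun a b h => hfS.1.1 (Subtype.coe_injective h)
  have hfTi : ∀ a b : Fin m, (fT a : V) = (fT b : V) → a = b :=
    fun a b h => hfT.1.1 (Subtype.coe_injective h)
  have hSne : ∀ (a : Fin k) (b : Fin m), (fS a : V) ≠ (fT b : V) := by
    intro a b h
    exact hfTmem b (h ▸ hfSmem a)
  constructor
  · constructor
    · -- injectivity
      intro a b hab
      have ha2 := a.2; have hb2 := b.2
      by_cases ha0 : (a : ℕ) = 0
      · by_cases hb0 : (b : ℕ) = 0
        · exact Fin.ext (by omega)
        · by_cases hbk : (b : ℕ) ≤ k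
          · rw [glue_zero hk hm fS fT a ha0, glue_S hk hm fS fT b hb0 hbk] at hab
            exact absurd hab.symm (hSne _ _)
          · rw [glue_zero hk hm fS fT a ha0, glue_T hk hm fS fT b (by omega)] at hab
            have h1 := congrArg Fin.val (hfTi _ _ hab)
            have h2 : (0 : ℕ) = (b : ℕ) - k := h1
            exact Fin.ext (by omega)
      · by_cases hak : (a : ℕ) ≤ k
        · by_cases hb0 : (b : ℕ) = 0
          · rw [glue_S hk hm fS fT a ha0 hak, glue_zero hk hm fS fT b hb0] at hab
            exact absurd hab (hSne _ _)
          · by_cases hbk : (b : ℕ) ≤ k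
            · rw [glue_S hk hm fS fT a ha0 hak, glue_S hk hm fS fT b hb0 hbk] at hab
              have h1 := congrArg Fin.val (hfSi _ _ hab)
              have h2 : (a : ℕ) - 1 = (b : ℕ) - 1 := h1
              exact Fin.ext (by omega)
            · rw [glue_S hk hm fS fT a ha0 hak, glue_T hk hm fS fT b (by omega)] at hab
              exact absurd hab (hSne _ _)
        · by_cases hb0 : (b : ℕ) = 0
          · rw [glue_T hk hm fS fT a (by omega), glue_zero hk hm fS fT b hb0] at hab
            have h1 := congrArg Fin.val (hfTi _ _ hab)
            have h2 : (a : ℕ) - k = (0 : ℕ) := h1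
            exact Fin.ext (by omega)
          · by_cases hbk : (b : ℕ) ≤ k
            · rw [glue_T hk hm fS fT a (by omega), glue_S hk hm fS fT b hb0 hbk] at hab
              exact absurd hab.symm (hSne _ _)
            · rw [glue_T hk hm fS fT a (by omega), glue_T hk hm fS fT b (by omega)] at hab
              have h1 := congrArg Fin.val (hfTi _ _ hab)
              have h2 : (a : ℕ) - k = (b : ℕ) - k := h1
              exact Fin.ext (by omega)
    · -- surjectivity
      intro x
      by_cases hx : x ∈ S
      · obtain ⟨i, hi⟩ := hfS.1.2 ⟨x, hx⟩
        have hi2 := i.2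
        refine ⟨⟨(i : ℕ) + 1, by omega⟩, ?_⟩
        rw [glue_succS hk hm fS fT i (by omega), hi]
      · obtain ⟨i, hi⟩ := hfT.1.2 ⟨x, (hTS x).mpr hx⟩
        have hi2 := i.2
        by_cases hi0 : (i : ℕ) = 0
        · refine ⟨⟨0, by omega⟩, ?_⟩
          rw [glue_zero hk hm fS fT _ rfl]
          have he : (⟨0, hm⟩ : Fin m) = i := Fin.ext (show 0 = (i : ℕ) by omega)
          rw [he, hi]
        · refine ⟨⟨(i : ℕ) + k, by omega⟩, ?_⟩
          rw [glue_succT hk hm fS fT i (by omega) (by omega), hi]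
  · -- DFS property
    intro j hj
    have hj2 := j.2
    by_cases hjk : (j : ℕ) ≤ k
    · -- j in the S region
      by_cases hj1 : (j : ℕ) = 1
      · -- j = 1 : predecessor is index 0 (vertex v), adjacent to u = fS 0
        refine ⟨⟨0, by omega⟩, show (0 : ℕ) < (j : ℕ) by omega, ?_, ?_, ?_⟩
        · refine ⟨u, ?_, ?_⟩
          · rw [glue_zero hk hm fS fT _ rfl, hfTv]
            exact huv.symm
          · intro i' hi'
            have h0 : (i' : ℕ) = 0 := by omega
            rw [glue_zero hk hm fS fT i' h0, hfTv]
            exact huv.ne'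
        · intro i'' h1 h2
          show (i'' : ℕ) ≤ 0
          omega
        · rw [glue_zero hk hm fS fT _ rfl, glue_S hk hm fS fT j (by omega) hjk, hfTv]
          have he : (j : ℕ) - 1 = 0 := by omega
          simp only [he]
          rw [hfSu]
          exact huv.symm
      · -- 2 ≤ j ≤ k : use the DFS property of fS at index j - 1
        obtain ⟨iS, hlt, ⟨w, hw_adj, hw_out⟩, hmaxS, hadjS⟩ :=
          hfS.2 ⟨(j : ℕ) - 1, by omega⟩ (show 0 < (j : ℕ) - 1 by omega)
        have hlt' : (iS : ℕ) < (j : ℕ) - 1 := hlt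
        have hw_out' : ∀ t : Fin k, (t : ℕ) < (j : ℕ) - 1 → fS t ≠ w := hw_out
        have hiS2 := iS.2
        refine ⟨⟨(iS : ℕ) + 1, by omega⟩, show (iS : ℕ) + 1 < (j : ℕ) by omega, ?_, ?_, ?_⟩
        · refine ⟨(w : V), ?_, ?_⟩
          · rw [glue_succS hk hm fS fT iS (by omega)]
            simpa using hw_adj
          · intro i' hi'
            by_cases h0 : (i' : ℕ) = 0
            · rw [glue_zero hk hm fS fT i' h0, hfTv]
              intro hh
              exact hvS (hh ▸ w.2)
            · rw [glue_S hk hm fS fT i' h0 (by omega)]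
              intro hh
              exact hw_out' ⟨(i' : ℕ) - 1, by omega⟩
                (show (i' : ℕ) - 1 < (j : ℕ) - 1 by omega) (Subtype.coe_injective hh)
        · rintro i'' h1 ⟨w', hw'adj, hw'out⟩
          show (i'' : ℕ) ≤ (iS : ℕ) + 1
          by_cases h0 : (i'' : ℕ) = 0
          · omega
          · rw [glue_S hk hm fS fT i'' h0 (by omega)] at hw'adj
            have hvne : glue hk hm fS fT ⟨0, by omega⟩ ≠ w' :=
              hw'out ⟨0, by omega⟩ (show 0 < (j : ℕ) by omega)
            rw [glue_zero hk hm fS fT _ rfl, hfTv] at hvne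
            have hw'S : w' ∈ S := by
              by_contra hns
              exact hvne (hcross _ _ (hfSmem _) hns hw'adj).2.symm
            have hnew : HasNewNbr (G.induce S) fS ((j : ℕ) - 1) ⟨(i'' : ℕ) - 1, by omega⟩ := by
              refine ⟨⟨w', hw'S⟩, by simpa using hw'adj, ?_⟩
              intro t ht hh
              have ht2 := t.2
              refine hw'out ⟨(t : ℕ) + 1, by omega⟩ (show (t : ℕ) + 1 < (j : ℕ) by omega) ?_
              rw [glue_succS hk hm fS fT t (by omega)]
              exact congrArg Subtype.val hh
            have h2 : (i'' : ℕ) - 1 ≤ (iS : ℕ) :=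
              hmaxS ⟨(i'' : ℕ) - 1, by omega⟩ (show (i'' : ℕ) - 1 < (j : ℕ) - 1 by omega) hnew
            omega
        · rw [glue_succS hk hm fS fT iS (by omega), glue_S hk hm fS fT j (by omega) hjk]
          simpa using hadjS
    · -- j in the T region : k < j
      obtain ⟨iT, hlt, ⟨w, hw_adj, hw_out⟩, hmaxT, hadjT⟩ :=
        hfT.2 ⟨(j : ℕ) - k, by omega⟩ (show 0 < (j : ℕ) - k by omega)
      have hlt' : (iT : ℕ) < (j : ℕ) - k := hlt
      have hw_out' : ∀ t : Fin m, (t : ℕ) < (j : ℕ) - k → fT t ≠ w := hw_out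
      have hiT2 := iT.2
      -- any index with a new neighbor is 0 or in the T region with fT-index ≤ iT
      have key : ∀ i'' : Fin (k + m), (i'' : ℕ) < (j : ℕ) →
          HasNewNbr G (glue hk hm fS fT) (j : ℕ) i'' →
          (i'' : ℕ) = 0 ∨ (k < (i'' : ℕ) ∧ (i'' : ℕ) - k ≤ (iT : ℕ)) := by
        rintro i'' h1 ⟨w', hw'adj, hw'out⟩
        have hw'nS : w' ∉ S := by
          intro hw'S
          obtain ⟨t, ht⟩ := hfS.1.2 ⟨w', hw'S⟩
          have ht2 := t.2
          refine hw'out ⟨(t : ℕ) + 1, by omega⟩ (show (t : ℕ) + 1 < (j : ℕ) by omega) ?_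
          rw [glue_succS hk hm fS fT t (by omega), ht]
        by_cases h0 : (i'' : ℕ) = 0
        · exact Or.inl h0
        by_cases hk'' : (i'' : ℕ) ≤ k
        · exfalso
          rw [glue_S hk hm fS fT i'' h0 hk''] at hw'adj
          have hc := hcross _ _ (hfSmem _) hw'nS hw'adj
          refine hw'out ⟨0, by omega⟩ (show (0 : ℕ) < (j : ℕ) by omega) ?_
          rw [glue_zero hk hm fS fT _ rfl, hfTv, hc.2]
        · refine Or.inr ⟨by omega, ?_⟩
          rw [glue_T hk hm fS fT i'' (by omega)] at hw'adj
          have hnew : HasNewNbr (G.induce T) fT ((j : ℕ) - k) ⟨(i'' : ℕ) - k, by omega⟩ := by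
            refine ⟨⟨w', (hTS w').mpr hw'nS⟩, by simpa using hw'adj, ?_⟩
            intro t ht hh
            have ht2 := t.2
            by_cases ht0 : (t : ℕ) = 0
            · refine hw'out ⟨0, by omega⟩ (show (0 : ℕ) < (j : ℕ) by omega) ?_
              rw [glue_zero hk hm fS fT _ rfl]
              have he : (⟨0, hm⟩ : Fin m) = t := Fin.ext (show 0 = (t : ℕ) by omega)
              rw [he]
              exact congrArg Subtype.val hh
            · refine hw'out ⟨(t : ℕ) + k, by omega⟩ (show (t : ℕ) + k < (j : ℕ) by omega) ?_
              rw [glue_succT hk hm fS fT t (by omega) (by omega)]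
              exact congrArg Subtype.val hh
          exact hmaxT ⟨(i'' : ℕ) - k, by omega⟩ (show (i'' : ℕ) - k < (j : ℕ) - k by omega) hnew
      by_cases hiT0 : (iT : ℕ) = 0
      · -- predecessor is index 0
        refine ⟨⟨0, by omega⟩, show (0 : ℕ) < (j : ℕ) by omega, ?_, ?_, ?_⟩
        · refine ⟨(w : V), ?_, ?_⟩
          · rw [glue_zero hk hm fS fT _ rfl]
            have he : (⟨0, hm⟩ : Fin m) = iT := Fin.ext (show 0 = (iT : ℕ) by omega)
            rw [he]
            simpa using hw_adj
          · intro i' hi'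
            by_cases h0 : (i' : ℕ) = 0
            · rw [glue_zero hk hm fS fT i' h0]
              intro hh
              exact hw_out' ⟨0, hm⟩ (show (0 : ℕ) < (j : ℕ) - k by omega)
                (Subtype.coe_injective hh)
            by_cases hik' : (i' : ℕ) ≤ k
            · rw [glue_S hk hm fS fT i' h0 hik']
              intro hh
              exact (hTS (w : V)).mp w.2 (hh ▸ hfSmem ⟨(i' : ℕ) - 1, by omega⟩)
            · rw [glue_T hk hm fS fT i' (by omega)]
              intro hh
              exact hw_out' ⟨(i' : ℕ) - k, by omega⟩
                (show (i' : ℕ) - k < (j : ℕ) - k by omega) (Subtype.coe_injective hh)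
        · intro i'' h1 h2
          show (i'' : ℕ) ≤ 0
          rcases key i'' h1 h2 with h | ⟨h3, h4⟩ <;> omega
        · rw [glue_zero hk hm fS fT _ rfl, glue_T hk hm fS fT j (by omega)]
          have he : (⟨0, hm⟩ : Fin m) = iT := Fin.ext (show 0 = (iT : ℕ) by omega)
          rw [he]
          simpa using hadjT
      · -- predecessor is in the T region, at glue index iT + k
        refine ⟨⟨(iT : ℕ) + k, by omega⟩, show (iT : ℕ) + k < (j : ℕ) by omega, ?_, ?_, ?_⟩
        · refine ⟨(w : V), ?_, ?_⟩
          · rw [glue_succT hk hm fS fT iT (by omega) (by omega)]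
            simpa using hw_adj
          · intro i' hi'
            by_cases h0 : (i' : ℕ) = 0
            · rw [glue_zero hk hm fS fT i' h0]
              intro hh
              exact hw_out' ⟨0, hm⟩ (show (0 : ℕ) < (j : ℕ) - k by omega)
                (Subtype.coe_injective hh)
            by_cases hik' : (i' : ℕ) ≤ k
            · rw [glue_S hk hm fS fT i' h0 hik']
              intro hh
              exact (hTS (w : V)).mp w.2 (hh ▸ hfSmem ⟨(i' : ℕ) - 1, by omega⟩)
            · rw [glue_T hk hm fS fT i' (by omega)]
              intro hh
              exact hw_out' ⟨(i' : ℕ) - k, by omega⟩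
                (show (i' : ℕ) - k < (j : ℕ) - k by omega) (Subtype.coe_injective hh)
        · intro i'' h1 h2
          show (i'' : ℕ) ≤ (iT : ℕ) + k
          rcases key i'' h1 h2 with h | ⟨h3, h4⟩ <;> omega
        · rw [glue_succT hk hm fS fT iT (by omega) (by omega),
            glue_T hk hm fS fT j (by omega)]
          simpa using hadjT
end

section
/- Let G be a connected simple graph on a finite vertex set V, let {u, v} be a bridge of G, let S be the vertex set of the connected component of u in the graph obtained from G by deleting {u, v}, and let T = V \ S (the component of v). Assume |T| ≥ 2 and assume the induced subgraph G[S] admits two distinct valid DFS orderings both starting at u. Then G admits two distinct valid DFS orderings that have the same start vertex (namely v) and the same end vertex. -/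
namespace DFSAux

open Classical

variable {V : Type*} (G : SimpleGraph V)

/-- index `i` of the list `l` has a neighbor outside `l`. -/
def goodIdx (r : V) (l : List V) (i : ℕ) : Prop :=
  i < l.length ∧ ∃ w, G.Adj (l.getD i r) w ∧ w ∉ l

open Classical in
noncomputable def dfsStep (r : V) (l : List V) : List V :=
  if h : ∃ i, goodIdx G r l i then
    l ++ [(Nat.findGreatest_spec (P := goodIdx G r l) h.choose_spec.1.le
            h.choose_spec).2.choose]
  else l

open Classical in
lemma dfsStep_spec (r : V) (l : List V) (h : ∃ i, goodIdx G r l i) :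
    ∃ w, dfsStep G r l = l ++ [w] ∧ w ∉ l ∧ ∃ i, i < l.length ∧ G.Adj (l.getD i r) w ∧
      ∀ i', goodIdx G r l i' → i' ≤ i := by
  have hg : goodIdx G r l (Nat.findGreatest (goodIdx G r l) l.length) :=
    Nat.findGreatest_spec (P := goodIdx G r l) h.choose_spec.1.le h.choose_spec
  refine ⟨hg.2.choose, ?_, hg.2.choose_spec.2, Nat.findGreatest (goodIdx G r l) l.length,
    hg.1, hg.2.choose_spec.1, fun i' h' => Nat.le_findGreatest h'.1.le h'⟩
  rw [dfsStep, dif_pos h]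

lemma dfsStep_prefix (r : V) (l : List V) : l <+: dfsStep G r l := by
  rw [dfsStep]
  split
  · exact ⟨_, rfl⟩
  · exact List.prefix_refl l

noncomputable def dfsList (r : V) : ℕ → List V
  | 0 => [r]
  | j + 1 => dfsStep G r (dfsList r j)

lemma dfsList_prefix (r : V) {j j' : ℕ} (h : j ≤ j') : dfsList G r j <+: dfsList G r j' := by
  induction j' with
  | zero => simpa [Nat.le_zero.mp h] using List.prefix_refl _
  | succ j' ih =>
    rcases Nat.lt_or_ge j (j' + 1) with h' | h'
    · exact (ih (Nat.lt_succ_iff.mp h')).trans (dfsStep_prefix G r _)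
    · have : j = j' + 1 := le_antisymm h h'
      subst this; exact List.prefix_refl _

lemma dfsList_nodup (r : V) (j : ℕ) : (dfsList G r j).Nodup := by
  induction j with
  | zero => simp [dfsList]
  | succ j ih =>
    show (dfsStep G r (dfsList G r j)).Nodup
    by_cases h : ∃ i, goodIdx G r (dfsList G r j) i
    · obtain ⟨w, hw, hwl, -⟩ := dfsStep_spec G r _ h
      rw [hw]
      simpa [List.nodup_append] using ⟨ih, fun a ha h => hwl (h ▸ ha)⟩
    · rw [dfsStep, dif_neg h]; exact ih

lemma dfsList_ne_nil (r : V) (j : ℕ) : dfsList G r j ≠ [] := by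
  intro h
  have := (dfsList_prefix G r (Nat.zero_le j)).length_le
  simp [dfsList, h] at this

/-- If the graph is preconnected and some vertex is missing from `l`, a good index exists. -/
lemma exists_goodIdx (hG : G.Preconnected) (r : V) (l : List V) (hne : l ≠ [])
    (hx : ∃ x, x ∉ l) : ∃ i, goodIdx G r l i := by
  classical
  obtain ⟨x, hx⟩ := hx
  have hlen : 0 < l.length := List.length_pos_iff.mpr hne
  have ha : l[0] ∈ l := List.getElem_mem _
  obtain ⟨p⟩ := hG l[0] x
  obtain ⟨d, -, hd1, hd2⟩ := p.exists_boundary_dart {y | y ∈ l} ha hx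
  refine ⟨List.idxOf d.fst l, List.idxOf_lt_length_iff.mpr hd1, d.snd, ?_, hd2⟩
  rw [List.getD_eq_getElem _ _ (List.idxOf_lt_length_iff.mpr hd1),
    List.getElem_idxOf (List.idxOf_lt_length_iff.mpr hd1)]
  exact d.adj

lemma dfsList_length [Fintype V] (hG : G.Preconnected) (r : V) :
    ∀ j, j < Fintype.card V → (dfsList G r j).length = j + 1 := by
  intro j
  induction j with
  | zero => intro _; simp [dfsList]
  | succ j ih =>
    intro hj
    have hlen : (dfsList G r j).length = j + 1 := ih (Nat.lt_of_succ_lt hj)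
    have hx : ∃ x, x ∉ dfsList G r j := by
      by_contra hc
      push_neg at hc
      have h1 : (Finset.univ : Finset V) ⊆ (dfsList G r j).toFinset := by
        intro x _; simpa using hc x
      have h2 := Finset.card_le_card h1
      have h3 := (dfsList G r j).toFinset_card_le
      simp only [Finset.card_univ] at h2
      omega
    obtain ⟨w, hw, -, -⟩ := dfsStep_spec G r _
      (exists_goodIdx G hG r _ (dfsList_ne_nil G r j) hx)
    show (dfsStep G r (dfsList G r j)).length = j + 2
    rw [hw]; simp [hlen]

theorem exists_dfs {V : Type*} [Fintype V] (G : SimpleGraph V) (hG : G.Connected) (r : V) :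
    ∃ f : Fin (Fintype.card V) → V, IsDFSOrder G f ∧
      ∀ h0 : 0 < Fintype.card V, f ⟨0, h0⟩ = r := by
  classical
  set n := Fintype.card V with hn
  have hn0 : 0 < n := Fintype.card_pos_iff.mpr hG.nonempty
  set L := dfsList G r (n - 1) with hL
  have hLlen : L.length = n := by
    rw [hL, dfsList_length G hG.preconnected r (n - 1) (by omega)]; omega
  refine ⟨fun i => L.getD i r, ⟨?_, ?_⟩, ?_⟩
  · -- bijective
    rw [Fintype.bijective_iff_injective_and_card]
    refine ⟨fun i1 i2 h12 => ?_, by simp [hn]⟩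
    have h1 : (i1 : ℕ) < L.length := by rw [hLlen]; exact i1.isLt
    have h2 : (i2 : ℕ) < L.length := by rw [hLlen]; exact i2.isLt
    have h12' : L.getD (i1 : ℕ) r = L.getD (i2 : ℕ) r := h12
    rw [List.getD_eq_getElem _ _ h1, List.getD_eq_getElem _ _ h2] at h12'
    have := List.nodup_iff_injective_get.mp (dfsList_nodup G r (n - 1))
      (a₁ := ⟨i1, h1⟩) (a₂ := ⟨i2, h2⟩) (by simpa using h12')
    exact Fin.ext (by simpa using congrArg Fin.val this)
  · -- DFS property
    intro j hj
    -- visited list at time j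
    set l1 := dfsList G r ((j : ℕ) - 1) with hl1
    have hl1len : l1.length = (j : ℕ) := by
      rw [hl1, dfsList_length G hG.preconnected r _ (by have := j.isLt; omega)]
      omega
    have hl1L : l1 <+: L := dfsList_prefix G r (by have := j.isLt; omega)
    have hfval : ∀ i : Fin n, (i : ℕ) < (j : ℕ) → ∀ hi : (i : ℕ) < l1.length,
        L.getD i r = l1[(i : ℕ)] := by
      intro i hij hi
      rw [List.getD_eq_getElem _ _ (by rw [hLlen]; exact i.isLt)]
      exact (hl1L.getElem hi).symm
    -- the step from time j-1 to time j
    have hstepped : dfsList G r (j : ℕ) = dfsStep G r l1 := by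
      rw [hl1]
      have : (j : ℕ) = ((j : ℕ) - 1) + 1 := by omega
      rw [this]; rfl
    have hglen : (dfsList G r (j : ℕ)).length = (j : ℕ) + 1 :=
      dfsList_length G hG.preconnected r _ j.isLt
    have hgood : ∃ i, goodIdx G r l1 i := by
      by_contra hc
      rw [hstepped, dfsStep, dif_neg hc, hl1len] at hglen
      omega
    obtain ⟨w, hw, hwl, i0, hi0len, hadj, hmax⟩ := dfsStep_spec G r l1 hgood
    have hl2L : l1 ++ [w] <+: L := by
      rw [← hw, ← hstepped]
      exact dfsList_prefix G r (by have := j.isLt; omega)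
    have hfj : L.getD (j : ℕ) r = w := by
      rw [List.getD_eq_getElem _ _ (by rw [hLlen]; exact j.isLt)]
      have hjlt : (j : ℕ) < (l1 ++ [w]).length := by simp [hl1len]
      rw [← hl2L.getElem hjlt]
      simp [hl1len]
    have hmem_iff : ∀ y : V, y ∈ l1 ↔ ∃ i' : Fin n, (i' : ℕ) < (j : ℕ) ∧ L.getD i' r = y := by
      intro y
      constructor
      · intro hy
        obtain ⟨t, ht, hty⟩ := List.mem_iff_getElem.mp hy
        refine ⟨⟨t, by omega⟩, by simpa [hl1len] using ht, ?_⟩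
        rw [hfval ⟨t, by omega⟩ (by simpa [hl1len] using ht) (by simpa using ht)]
        exact hty
      · rintro ⟨i', hi', rfl⟩
        rw [hfval i' hi' (by omega)]
        exact List.getElem_mem _
    have hi0j : i0 < (j : ℕ) := by omega
    have hi0n : i0 < n := lt_trans hi0j j.isLt
    rw [List.getD_eq_getElem _ _ hi0len] at hadj
    have hval_i0 : L.getD ((⟨i0, hi0n⟩ : Fin n) : ℕ) r = l1[i0] :=
      hfval ⟨i0, hi0n⟩ hi0j hi0len
    refine ⟨⟨i0, hi0n⟩, hi0j, ⟨w, ?_, ?_⟩, ?_, ?_⟩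
    · show G.Adj (L.getD ((⟨i0, hi0n⟩ : Fin n) : ℕ) r) w
      rw [hval_i0]; exact hadj
    · intro i' hi' hcon
      exact hwl ((hmem_iff w).mpr ⟨i', hi', hcon⟩)
    · rintro i' hi' ⟨w', hadj', hnew'⟩
      show (i' : ℕ) ≤ ((⟨i0, hi0n⟩ : Fin n) : ℕ)
      refine hmax i' ⟨by omega, w', ?_, fun hmem => ?_⟩
      · rw [List.getD_eq_getElem _ _ (by omega), ← hfval i' hi' (by omega)]
        exact hadj'
      · obtain ⟨t, ht, hty⟩ := (hmem_iff w').mp hmem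
        exact hnew' t ht hty
    · show G.Adj (L.getD ((⟨i0, hi0n⟩ : Fin n) : ℕ) r) (L.getD (j : ℕ) r)
      rw [hfj, hval_i0]; exact hadj
  · intro h0
    show L.getD 0 r = r
    have h1 : [r] <+: L := dfsList_prefix G r (Nat.zero_le _)
    rw [List.getD_eq_getElem _ _ (by omega)]
    exact (h1.getElem (show 0 < [r].length by simp)).symm
end DFSAux

namespace DFSAux

lemma hasNewNbr_def {V : Type*} (G : SimpleGraph V) {n : ℕ} (f : Fin n → V) (j : ℕ)
    (i : Fin n) : HasNewNbr G f j i ↔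
      ∃ w : V, G.Adj (f i) w ∧ ∀ i' : Fin n, (i' : ℕ) < j → f i' ≠ w := Iff.rfl

def spliceFun {V : Type*} (v : V) {k m n : ℕ} (hkm : k + m = n)
    (fS' : Fin k → V) (gT' : Fin m → V) : Fin n → V :=
  fun i =>
    if h0 : (i : ℕ) = 0 then v
    else if hik : (i : ℕ) ≤ k then fS' ⟨(i : ℕ) - 1, by omega⟩
    else gT' ⟨(i : ℕ) - k, by have := i.isLt; omega⟩

section SpliceVal

variable {V : Type*} (v : V) {k m n : ℕ} (hkm : k + m = n) (fS' : Fin k → V) (gT' : Fin m → V)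

lemma spliceFun_zero (i : Fin n) (h : (i : ℕ) = 0) : spliceFun v hkm fS' gT' i = v := by
  unfold spliceFun
  rw [dif_pos h]

lemma spliceFun_S (i : Fin n) (h1 : (i : ℕ) ≠ 0) (h2 : (i : ℕ) ≤ k)
    (h3 : (i : ℕ) - 1 < k) : spliceFun v hkm fS' gT' i = fS' ⟨(i : ℕ) - 1, h3⟩ := by
  unfold spliceFun
  rw [dif_neg h1, dif_pos h2]

lemma spliceFun_T (i : Fin n) (h2 : ¬ (i : ℕ) ≤ k) (h3 : (i : ℕ) - k < m) :
    spliceFun v hkm fS' gT' i = gT' ⟨(i : ℕ) - k, h3⟩ := by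
  unfold spliceFun
  rw [dif_neg (by omega), dif_neg h2]

end SpliceVal

theorem splice_isDFS {V : Type*} [Fintype V] (G : SimpleGraph V) (u v : V)
    (S T : Set V) (hT : T = Sᶜ)
    (hSclosed : ∀ x ∈ S, ∀ y : V, G.Adj x y → y ∈ S ∨ (x = u ∧ y = v))
    (hTclosed : ∀ x ∈ T, ∀ y : V, G.Adj x y → y ∈ T ∨ (x = v ∧ y = u))
    (huS : u ∈ S) (hvT : v ∈ T) (huv : G.Adj u v)
    {k m : ℕ} (hk : 0 < k) (hm : 2 ≤ m) (hkm : k + m = Fintype.card V)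
    (fS : Fin k → S) (hfS : IsDFSOrder (G.induce S) fS) (hfSu : (fS ⟨0, hk⟩ : V) = u)
    (gT : Fin m → T) (hgT : IsDFSOrder (G.induce T) gT)
    (hgTv : (gT ⟨0, by omega⟩ : V) = v) :
    IsDFSOrder G (spliceFun v hkm (fun i => (fS i : V)) (fun i => (gT i : V))) := by
  have hTS : ∀ x : V, x ∈ T → x ∉ S := by intro x hx; rw [hT] at hx; exact hx
  have hST : ∀ x : V, x ∈ S → x ∉ T := fun x hx hx' => hTS x hx' hx
  have hvS : v ∉ S := hTS v hvT
  set g : Fin (Fintype.card V) → V :=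
    spliceFun v hkm (fun i => (fS i : V)) (fun i => (gT i : V)) with hgdef
  have hg0 : ∀ i : Fin (Fintype.card V), (i : ℕ) = 0 → g i = v :=
    fun i h => spliceFun_zero v hkm _ _ i h
  have hgS : ∀ i : Fin (Fintype.card V), (i : ℕ) ≠ 0 → (i : ℕ) ≤ k →
      ∀ h3 : (i : ℕ) - 1 < k, g i = (fS ⟨(i : ℕ) - 1, h3⟩ : V) :=
    fun i h1 h2 h3 => spliceFun_S v hkm _ _ i h1 h2 h3
  have hgT' : ∀ i : Fin (Fintype.card V), ¬ (i : ℕ) ≤ k →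
      ∀ h3 : (i : ℕ) - k < m, g i = (gT ⟨(i : ℕ) - k, h3⟩ : V) :=
    fun i h2 h3 => spliceFun_T v hkm _ _ i h2 h3
  have hnbig : k + 2 ≤ Fintype.card V := by omega
  have keyS : ∀ (a : Fin k) (hb : (a : ℕ) + 1 < Fintype.card V),
      g ⟨(a : ℕ) + 1, hb⟩ = (fS a : V) := by
    intro a hb
    exact hgS ⟨(a : ℕ) + 1, hb⟩ (show (a : ℕ) + 1 ≠ 0 by omega)
      (show (a : ℕ) + 1 ≤ k from a.isLt) (show (a : ℕ) + 1 - 1 < k by have := a.isLt; omega)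
  have keyT : ∀ (a : Fin m), (a : ℕ) ≠ 0 → ∀ hb : k + (a : ℕ) < Fintype.card V,
      g ⟨k + (a : ℕ), hb⟩ = (gT a : V) := by
    intro a ha hb
    rw [hgT' ⟨k + (a : ℕ), hb⟩ (show ¬ k + (a : ℕ) ≤ k by omega)
      (show k + (a : ℕ) - k < m by have := a.isLt; omega)]
    exact congrArg (fun t => (gT t : V)) (Fin.ext (show k + (a : ℕ) - k = (a : ℕ) by omega))
  have hne_v : ∀ i : Fin (Fintype.card V), ¬ (i : ℕ) ≤ k → g i ≠ v := by
    intro i hik hc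
    have h3 : (i : ℕ) - k < m := by have := i.isLt; omega
    rw [hgT' i hik h3] at hc
    have he : gT ⟨(i : ℕ) - k, h3⟩ = gT ⟨0, by omega⟩ :=
      Subtype.ext (hc.trans hgTv.symm)
    have := congrArg Fin.val (hgT.1.1 he)
    simp only [Fin.val_mk] at this
    omega
  constructor
  · -- bijectivity
    rw [Fintype.bijective_iff_injective_and_card]
    refine ⟨fun i1 i2 heq => ?_, by simp⟩
    by_cases h01 : (i1 : ℕ) = 0 <;> by_cases h02 : (i2 : ℕ) = 0
    · exact Fin.ext (by omega)
    · by_cases hik2 : (i2 : ℕ) ≤ k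
      · rw [hg0 i1 h01, hgS i2 h02 hik2 (by omega)] at heq
        have := (fS ⟨(i2 : ℕ) - 1, by omega⟩).2
        rw [← heq] at this
        exact absurd this hvS
      · exact absurd (hg0 i1 h01 ▸ heq).symm (hne_v i2 hik2)
    · by_cases hik1 : (i1 : ℕ) ≤ k
      · rw [hg0 i2 h02, hgS i1 h01 hik1 (by omega)] at heq
        have := (fS ⟨(i1 : ℕ) - 1, by omega⟩).2
        rw [heq] at this
        exact absurd this hvS
      · exact absurd (hg0 i2 h02 ▸ heq) (hne_v i1 hik1)
    · by_cases hik1 : (i1 : ℕ) ≤ k <;> by_cases hik2 : (i2 : ℕ) ≤ k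
      · rw [hgS i1 h01 hik1 (by omega), hgS i2 h02 hik2 (by omega)] at heq
        have := congrArg Fin.val (hfS.1.1 (Subtype.ext heq))
        simp only [Fin.val_mk] at this
        exact Fin.ext (by omega)
      · rw [hgS i1 h01 hik1 (by omega),
          hgT' i2 hik2 (by have := i2.isLt; omega)] at heq
        have := (fS ⟨(i1 : ℕ) - 1, by omega⟩).2
        rw [heq] at this
        exact absurd this (hTS _ (gT _).2)
      · rw [hgS i2 h02 hik2 (by omega),
          hgT' i1 hik1 (by have := i1.isLt; omega)] at heq
        have := (fS ⟨(i2 : ℕ) - 1, by omega⟩).2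
        rw [← heq] at this
        exact absurd this (hTS _ (gT _).2)
      · rw [hgT' i1 hik1 (by have := i1.isLt; omega),
          hgT' i2 hik2 (by have := i2.isLt; omega)] at heq
        have := congrArg Fin.val (hgT.1.1 (Subtype.ext heq))
        simp only [Fin.val_mk] at this
        exact Fin.ext (by omega)
  · -- DFS property
    intro j hj
    have hjlt := j.isLt
    by_cases hjk : (j : ℕ) ≤ k
    · by_cases hj1 : (j : ℕ) = 1
      · -- first step into S
        have hgj : g j = u := by
          rw [hgS j (by omega) hjk (by omega)]
          rw [show (⟨(j : ℕ) - 1, by omega⟩ : Fin k) = ⟨0, hk⟩ from Fin.ext (show (j : ℕ) - 1 = 0 by omega), hfSu]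
        refine ⟨⟨0, by omega⟩, show (0 : ℕ) < (j : ℕ) by omega, ⟨u, ?_, ?_⟩, ?_, ?_⟩
        · rw [hg0 ⟨0, by omega⟩ rfl]
          exact huv.symm
        · intro i' hi' hc
          have h0 : (i' : ℕ) = 0 := by omega
          rw [hg0 i' h0] at hc
          exact (Ne.symm huv.ne) hc
        · intro i' hi' _
          show (i' : ℕ) ≤ (0 : ℕ)
          omega
        · rw [hg0 ⟨0, by omega⟩ rfl, hgj]
          exact huv.symm
      · -- deep in the S phase: 2 ≤ j ≤ k
        have hj2 : 2 ≤ (j : ℕ) := by omega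
        have hjS : (j : ℕ) - 1 < k := by omega
        obtain ⟨iS, hiSlt, hnnS, hiSmax, hiSadj⟩ :=
          hfS.2 ⟨(j : ℕ) - 1, hjS⟩ (show 0 < (j : ℕ) - 1 by omega)
        obtain ⟨wS, hwSadj, hwSnew⟩ := (hasNewNbr_def _ _ _ _).mp hnnS
        have hiSlt' : (iS : ℕ) < (j : ℕ) - 1 := hiSlt
        have hin : (iS : ℕ) + 1 < Fintype.card V := by omega
        have hgi : g ⟨(iS : ℕ) + 1, hin⟩ = (fS iS : V) := keyS iS hin
        refine ⟨⟨(iS : ℕ) + 1, hin⟩, show (iS : ℕ) + 1 < (j : ℕ) by omega,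
          ⟨(wS : V), ?_, ?_⟩, ?_, ?_⟩
        · rw [hgi]; exact hwSadj
        · intro i' hi' hc
          by_cases h0 : (i' : ℕ) = 0
          · rw [hg0 i' h0] at hc
            have := wS.2
            rw [← hc] at this
            exact hvS this
          · have hik' : (i' : ℕ) ≤ k := by omega
            rw [hgS i' h0 hik' (by omega)] at hc
            exact hwSnew ⟨(i' : ℕ) - 1, by omega⟩
              (show (i' : ℕ) - 1 < (j : ℕ) - 1 by omega) (Subtype.ext hc)
        · intro i' hi' hnn'
          obtain ⟨w, hadj, hnew⟩ := (hasNewNbr_def _ _ _ _).mp hnn'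
          by_cases h0 : (i' : ℕ) = 0
          · omega
          · have hik' : (i' : ℕ) ≤ k := by omega
            have hw_ne_v : w ≠ v := fun hwv =>
              hnew ⟨0, by omega⟩ (show (0 : ℕ) < (j : ℕ) by omega)
                ((hg0 ⟨0, by omega⟩ rfl).trans hwv.symm)
            rw [hgS i' h0 hik' (by omega)] at hadj
            rcases hSclosed _ (fS ⟨(i' : ℕ) - 1, by omega⟩).2 w hadj with hwS | ⟨-, hwv⟩
            · have hnnS' : HasNewNbr (G.induce S) fS ((⟨(j : ℕ) - 1, hjS⟩ : Fin k) : ℕ)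
                  ⟨(i' : ℕ) - 1, by omega⟩ := by
                refine ⟨⟨w, hwS⟩, hadj, ?_⟩
                intro i'' hi'' hceq
                have hi''lt : (i'' : ℕ) < (j : ℕ) - 1 := hi''
                have hglob : (i'' : ℕ) + 1 < Fintype.card V := by omega
                apply hnew ⟨(i'' : ℕ) + 1, hglob⟩ (show (i'' : ℕ) + 1 < (j : ℕ) by omega)
                rw [keyS i'' hglob]
                exact congrArg Subtype.val hceq
              have hle : (i' : ℕ) - 1 ≤ (iS : ℕ) :=
                hiSmax ⟨(i' : ℕ) - 1, by omega⟩
                  (show (i' : ℕ) - 1 < (j : ℕ) - 1 by omega) hnnS'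
              show (i' : ℕ) ≤ (iS : ℕ) + 1
              omega
            · exact absurd hwv hw_ne_v
        · rw [hgi, hgS j (by omega) hjk (by omega)]
          exact hiSadj
    · -- T phase : k < j
      have hjT : (j : ℕ) - k < m := by omega
      have hjT1 : 0 < (j : ℕ) - k := by omega
      obtain ⟨iT, hiTlt, hnnT, hiTmax, hiTadj⟩ :=
        hgT.2 ⟨(j : ℕ) - k, hjT⟩ (show 0 < (j : ℕ) - k from hjT1)
      obtain ⟨wT, hwTadj, hwTnew⟩ := (hasNewNbr_def _ _ _ _).mp hnnT
      have hiTlt' : (iT : ℕ) < (j : ℕ) - k := hiTlt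
      have hpack : ∃ i : Fin (Fintype.card V), (i : ℕ) < (j : ℕ) ∧ g i = (gT iT : V) ∧
          (((iT : ℕ) = 0 ∧ (i : ℕ) = 0) ∨ (i : ℕ) = k + (iT : ℕ)) := by
        by_cases hiT0 : (iT : ℕ) = 0
        · refine ⟨⟨0, by omega⟩, show (0 : ℕ) < (j : ℕ) by omega, ?_, Or.inl ⟨hiT0, rfl⟩⟩
          rw [hg0 ⟨0, by omega⟩ rfl,
            show gT iT = gT ⟨0, by omega⟩ from congrArg gT (Fin.ext hiT0)]
          exact hgTv.symm
        · have hb : k + (iT : ℕ) < Fintype.card V := by omega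
          exact ⟨⟨k + (iT : ℕ), hb⟩, show k + (iT : ℕ) < (j : ℕ) by omega,
            keyT iT hiT0 hb, Or.inr rfl⟩
      obtain ⟨i, hij, hgi, hicase⟩ := hpack
      refine ⟨i, hij, ⟨(wT : V), ?_, ?_⟩, ?_, ?_⟩
      · rw [hgi]; exact hwTadj
      · intro i' hi' hc
        by_cases h0 : (i' : ℕ) = 0
        · rw [hg0 i' h0] at hc
          exact hwTnew ⟨0, by omega⟩ (show (0 : ℕ) < (j : ℕ) - k from hjT1)
            (Subtype.ext (hgTv.trans hc))
        · by_cases hik' : (i' : ℕ) ≤ k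
          · rw [hgS i' h0 hik' (by omega)] at hc
            have hmem := (fS ⟨(i' : ℕ) - 1, by omega⟩).2
            rw [hc] at hmem
            exact hST _ hmem wT.2
          · rw [hgT' i' hik' (by have := i'.isLt; omega)] at hc
            exact hwTnew ⟨(i' : ℕ) - k, by omega⟩
              (show (i' : ℕ) - k < (j : ℕ) - k by omega) (Subtype.ext hc)
      · intro i' hi' hnn'
        obtain ⟨w, hadj, hnew⟩ := (hasNewNbr_def _ _ _ _).mp hnn'
        by_cases h0 : (i' : ℕ) = 0
        · omega
        · have hw_ne_v : w ≠ v := fun hwv =>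
            hnew ⟨0, by omega⟩ (show (0 : ℕ) < (j : ℕ) by omega)
              ((hg0 ⟨0, by omega⟩ rfl).trans hwv.symm)
          by_cases hik' : (i' : ℕ) ≤ k
          · exfalso
            rw [hgS i' h0 hik' (by omega)] at hadj
            rcases hSclosed _ (fS ⟨(i' : ℕ) - 1, by omega⟩).2 w hadj with hwS | ⟨-, hwv⟩
            · obtain ⟨t, ht⟩ := hfS.1.2 ⟨w, hwS⟩
              have htlt : (t : ℕ) + 1 < Fintype.card V := by have := t.isLt; omega
              refine hnew ⟨(t : ℕ) + 1, htlt⟩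
                (show (t : ℕ) + 1 < (j : ℕ) by have := t.isLt; omega) ?_
              rw [keyS t htlt]
              exact congrArg Subtype.val ht
            · exact hw_ne_v hwv
          · rw [hgT' i' hik' (by have := i'.isLt; omega)] at hadj
            rcases hTclosed _ (gT ⟨(i' : ℕ) - k, by have := i'.isLt; omega⟩).2 w hadj
              with hwT | ⟨-, hwu⟩
            · have hnnT' : HasNewNbr (G.induce T) gT ((⟨(j : ℕ) - k, hjT⟩ : Fin m) : ℕ)
                  ⟨(i' : ℕ) - k, by have := i'.isLt; omega⟩ := by
                refine ⟨⟨w, hwT⟩, hadj, ?_⟩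
                intro i'' hi'' hceq
                have hi''lt : (i'' : ℕ) < (j : ℕ) - k := hi''
                by_cases h0'' : (i'' : ℕ) = 0
                · apply hw_ne_v
                  rw [show gT i'' = gT ⟨0, by omega⟩ from congrArg gT (Fin.ext h0'')] at hceq
                  have h5 := congrArg Subtype.val hceq
                  exact h5.symm.trans hgTv
                · have hb'' : k + (i'' : ℕ) < Fintype.card V := by omega
                  apply hnew ⟨k + (i'' : ℕ), hb''⟩ (show k + (i'' : ℕ) < (j : ℕ) by omega)
                  rw [keyT i'' h0'' hb'']
                  exact congrArg Subtype.val hceq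
              have hle : (i' : ℕ) - k ≤ (iT : ℕ) :=
                hiTmax ⟨(i' : ℕ) - k, by have := i'.isLt; omega⟩
                  (show (i' : ℕ) - k < (j : ℕ) - k by omega) hnnT'
              rcases hicase with ⟨h1, h2⟩ | h1 <;> omega
            · -- w = u : but u is already visited
              exfalso
              have h1k : (1 : ℕ) < Fintype.card V := by omega
              refine hnew ⟨1, h1k⟩ (show (1 : ℕ) < (j : ℕ) by omega) ?_
              have : g ⟨1, h1k⟩ = (fS ⟨0, hk⟩ : V) := keyS ⟨0, hk⟩ h1k
              rw [this, hfSu, hwu]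
      · rw [hgi, hgT' j hjk hjT]
        exact hiTadj

end DFSAux

namespace DFSAux

lemma reach_dichotomy {V : Type*} (G : SimpleGraph V) (hG : G.Connected) (u v x : V) :
    (G.deleteEdges {s(u, v)}).Reachable u x ∨ (G.deleteEdges {s(u, v)}).Reachable v x := by
  have key : ∀ a b : V, G.Walk a b →
      ((G.deleteEdges {s(u, v)}).Reachable u a ∨ (G.deleteEdges {s(u, v)}).Reachable v a) →
      ((G.deleteEdges {s(u, v)}).Reachable u b ∨ (G.deleteEdges {s(u, v)}).Reachable v b) := by
    intro a b p
    induction p with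
    | nil => exact id
    | @cons a c b h p ih =>
      intro hab
      apply ih
      by_cases he : s(a, c) = s(u, v)
      · rw [Sym2.eq_iff] at he
        rcases he with ⟨-, rfl⟩ | ⟨-, rfl⟩
        · exact Or.inr (SimpleGraph.Reachable.refl _)
        · exact Or.inl (SimpleGraph.Reachable.refl _)
      · have hadj : (G.deleteEdges {s(u, v)}).Adj a c := by
          rw [SimpleGraph.deleteEdges_adj]
          exact ⟨h, by simpa using he⟩
        rcases hab with h' | h'
        · exact Or.inl (h'.trans hadj.reachable)
        · exact Or.inr (h'.trans hadj.reachable)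
  obtain ⟨p⟩ := hG.preconnected u x
  exact key u x p (Or.inl (SimpleGraph.Reachable.refl _))

lemma induce_connected_of_reach {V : Type*} (G G' : SimpleGraph V) (A : Set V) (r : V)
    (hr : r ∈ A) (hle : G' ≤ G)
    (hclosed : ∀ x ∈ A, ∀ y : V, G'.Adj x y → y ∈ A)
    (hreach : ∀ x ∈ A, G'.Reachable r x) : (G.induce A).Connected := by
  have claim : ∀ a b : V, G'.Walk a b → ∀ ha : a ∈ A,
      ∃ hb : b ∈ A, (G.induce A).Reachable ⟨a, ha⟩ ⟨b, hb⟩ := by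
    intro a b p
    induction p with
    | nil => exact fun ha => ⟨ha, SimpleGraph.Reachable.refl _⟩
    | @cons a c b h p ih =>
      intro ha
      have hc : c ∈ A := hclosed a ha c h
      obtain ⟨hb, hr'⟩ := ih hc
      refine ⟨hb, SimpleGraph.Reachable.trans ?_ hr'⟩
      exact SimpleGraph.Adj.reachable (show (G.induce A).Adj ⟨a, ha⟩ ⟨c, hc⟩ from hle h)
  haveI : Nonempty ↥A := ⟨⟨r, hr⟩⟩
  refine SimpleGraph.Connected.mk ?_
  intro x y
  obtain ⟨px⟩ := hreach x.1 x.2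
  obtain ⟨py⟩ := hreach y.1 y.2
  obtain ⟨hx', rx⟩ := claim r x.1 px hr
  obtain ⟨hy', ry⟩ := claim r y.1 py hr
  have rx' : (G.induce A).Reachable ⟨r, hr⟩ x := rx
  have ry' : (G.induce A).Reachable ⟨r, hr⟩ y := ry
  exact rx'.symm.trans ry'

end DFSAux


open DFSAux

/-- Let `{u, v}` be a bridge of a connected graph `G`, `S` the component of
`u` after deleting the bridge, `T = Sᶜ` with `|T| ≥ 2`. If `G[S]` has two distinct valid DFS
orderings both starting at `u`, then `G` has two distinct valid DFS orderings with the same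
start vertex (namely `v`) and the same end vertex. -/
theorem stmt_4 {V : Type*} [Fintype V] (G : SimpleGraph V) (hG : G.Connected)
    (u v : V) (hbr : G.IsBridge s(u, v))
    (S : Set V) (hS : S = {x : V | (G.deleteEdges {s(u, v)}).Reachable u x})
    (T : Set V) (hT : T = Sᶜ) (hT2 : 2 ≤ T.ncard)
    {k : ℕ} (hk : 0 < k)
    (fS1 fS2 : Fin k → S)
    (h1 : IsDFSOrder (G.induce S) fS1) (h2 : IsDFSOrder (G.induce S) fS2)
    (h1u : (fS1 ⟨0, hk⟩ : V) = u) (h2u : (fS2 ⟨0, hk⟩ : V) = u)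
    (hne : fS1 ≠ fS2) :
    ∃ g1 g2 : Fin (Fintype.card V) → V,
      IsDFSOrder G g1 ∧ IsDFSOrder G g2 ∧ g1 ≠ g2 ∧
      (∀ i : Fin (Fintype.card V), (i : ℕ) = 0 → g1 i = v ∧ g2 i = v) ∧
      (∀ i : Fin (Fintype.card V), (i : ℕ) = Fintype.card V - 1 → g1 i = g2 i) := by
  classical
  have huv : G.Adj u v := hbr.reachable_iff_adj.mp (hG.preconnected u v)
  have hnr : ¬ (G.deleteEdges {s(u, v)}).Reachable u v := SimpleGraph.isBridge_iff.mp hbr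
  have hSreach : ∀ x : V, x ∈ S ↔ (G.deleteEdges {s(u, v)}).Reachable u x := by
    intro x; rw [hS]; exact Iff.rfl
  have huS : u ∈ S := (hSreach u).mpr (SimpleGraph.Reachable.refl _)
  have hTreach : ∀ x : V, x ∈ T ↔ (G.deleteEdges {s(u, v)}).Reachable v x := by
    intro x
    rw [hT]
    constructor
    · intro hx
      rcases reach_dichotomy G hG u v x with h | h
      · exact absurd ((hSreach x).mpr h) hx
      · exact h
    · intro h hxS
      exact hnr (((hSreach x).mp hxS).trans h.symm)
  have hvT : v ∈ T := (hTreach v).mpr (SimpleGraph.Reachable.refl _)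
  have hvS : v ∉ S := by rw [hT] at hvT; exact hvT
  have huT : u ∉ T := by rw [hT]; simpa using huS
  have hScl' : ∀ x ∈ S, ∀ y : V, (G.deleteEdges {s(u, v)}).Adj x y → y ∈ S :=
    fun x hx y h => (hSreach y).mpr (((hSreach x).mp hx).trans h.reachable)
  have hTcl' : ∀ x ∈ T, ∀ y : V, (G.deleteEdges {s(u, v)}).Adj x y → y ∈ T :=
    fun x hx y h => (hTreach y).mpr (((hTreach x).mp hx).trans h.reachable)
  have hSclosed : ∀ x ∈ S, ∀ y : V, G.Adj x y → y ∈ S ∨ (x = u ∧ y = v) := by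
    intro x hx y hadj
    by_cases he : s(x, y) = s(u, v)
    · rw [Sym2.eq_iff] at he
      rcases he with ⟨rfl, rfl⟩ | ⟨rfl, rfl⟩
      · exact Or.inr ⟨rfl, rfl⟩
      · exact absurd hx hvS
    · refine Or.inl (hScl' x hx y ?_)
      rw [SimpleGraph.deleteEdges_adj]
      exact ⟨hadj, by simpa using he⟩
  have hTclosed : ∀ x ∈ T, ∀ y : V, G.Adj x y → y ∈ T ∨ (x = v ∧ y = u) := by
    intro x hx y hadj
    by_cases he : s(x, y) = s(u, v)
    · rw [Sym2.eq_iff] at he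
      rcases he with ⟨rfl, rfl⟩ | ⟨rfl, rfl⟩
      · exact absurd hx huT
      · exact Or.inr ⟨rfl, rfl⟩
    · refine Or.inl (hTcl' x hx y ?_)
      rw [SimpleGraph.deleteEdges_adj]
      exact ⟨hadj, by simpa using he⟩
  have hconT : (G.induce T).Connected :=
    induce_connected_of_reach G (G.deleteEdges {s(u, v)}) T v hvT
      (SimpleGraph.deleteEdges_le _) hTcl' (fun x hx => (hTreach x).mp hx)
  -- cardinalities
  have hkcard : k = Fintype.card S := by
    have := Fintype.card_of_bijective h1.1
    simpa using this
  have hm2 : 2 ≤ Fintype.card T := by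
    have : T.ncard = Fintype.card T := by
      rw [← Nat.card_coe_set_eq, Nat.card_eq_fintype_card]
    omega
  have hscard : S.ncard = Fintype.card S := by
    rw [← Nat.card_coe_set_eq, Nat.card_eq_fintype_card]
  have htcard : T.ncard = Fintype.card T := by
    rw [← Nat.card_coe_set_eq, Nat.card_eq_fintype_card]
  have hsum : S.ncard + T.ncard = Fintype.card V := by
    rw [hT, Set.ncard_add_ncard_compl S, Nat.card_eq_fintype_card]
  have hkm : k + Fintype.card T = Fintype.card V := by omega
  -- the DFS ordering of the T part
  obtain ⟨gT, hgTdfs, hgT0⟩ := exists_dfs (G.induce T) hconT ⟨v, hvT⟩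
  have hm0 : 0 < Fintype.card T := by omega
  have hgTv : (gT ⟨0, hm0⟩ : V) = v := congrArg Subtype.val (hgT0 hm0)
  refine ⟨spliceFun v hkm (fun i => (fS1 i : V)) (fun i => (gT i : V)),
          spliceFun v hkm (fun i => (fS2 i : V)) (fun i => (gT i : V)), ?_, ?_, ?_, ?_, ?_⟩
  · exact splice_isDFS G u v S T hT hSclosed hTclosed huS hvT huv hk hm2 hkm
      fS1 h1 h1u gT hgTdfs hgTv
  · exact splice_isDFS G u v S T hT hSclosed hTclosed huS hvT huv hk hm2 hkm
      fS2 h2 h2u gT hgTdfs hgTv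
  · obtain ⟨iS, hiS⟩ := Function.ne_iff.mp hne
    intro hc
    have hlt : (iS : ℕ) + 1 < Fintype.card V := by have := iS.isLt; omega
    have hco := congrFun hc ⟨(iS : ℕ) + 1, hlt⟩
    rw [spliceFun_S v hkm _ _ ⟨(iS : ℕ) + 1, hlt⟩ (show (iS : ℕ) + 1 ≠ 0 by omega)
        (show (iS : ℕ) + 1 ≤ k from iS.isLt) (show (iS : ℕ) + 1 - 1 < k from iS.isLt),
      spliceFun_S v hkm _ _ ⟨(iS : ℕ) + 1, hlt⟩ (show (iS : ℕ) + 1 ≠ 0 by omega)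
        (show (iS : ℕ) + 1 ≤ k from iS.isLt) (show (iS : ℕ) + 1 - 1 < k from iS.isLt)] at hco
    exact hiS (Subtype.ext hco)
  · intro i hi0
    exact ⟨spliceFun_zero v hkm _ _ i hi0, spliceFun_zero v hkm _ _ i hi0⟩
  · intro i hi
    have hik : ¬ (i : ℕ) ≤ k := by omega
    have h3 : (i : ℕ) - k < Fintype.card T := by have := i.isLt; omega
    rw [spliceFun_T v hkm _ _ i hik h3, spliceFun_T v hkm _ _ i hik h3]
end

section
/- Let G be a simple graph on a finite vertex set V with |V| ≥ 3. Assume G is 2-edge-connected (G is connected and deleting any single edge of G leaves a connected graph) and G is not a cycle graph (not every vertex of G has degree exactly 2). Then there exist two distinct valid DFS orderings of G with the same end vertex. -/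
section DFSAux

variable {V : Type*} (G : SimpleGraph V)

/-- `v` has a neighbor outside the list `l`. -/
def LNew (l : List V) (v : V) : Prop := ∃ w, G.Adj v w ∧ w ∉ l

/-- `l` is a valid DFS prefix. -/
def ValidL (l : List V) : Prop :=
  l.Nodup ∧ ∀ j, (hj : j < l.length) → 0 < j →
    ∃ i, ∃ hij : i < j, LNew G (l.take j) (l[i]'(hij.trans hj)) ∧
      (∀ i', (hij' : i' < j) → LNew G (l.take j) (l[i']'(hij'.trans hj)) → i' ≤ i) ∧
      G.Adj (l[i]'(hij.trans hj)) (l[j]'hj)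

lemma cross_of_walk (l : List V) :
    ∀ {x u : V}, G.Walk x u → x ∉ l → u ∈ l →
      ∃ a b, a ∈ l ∧ b ∉ l ∧ G.Adj a b := by
  intro x u w
  induction w with
  | nil => intro hx hu; exact absurd hu hx
  | @cons x y u h p ih =>
    intro hx hu
    by_cases hy : y ∈ l
    · exact ⟨y, x, hy, hx, h.symm⟩
    · exact ih hy hu

lemma exists_notMem [Fintype V] (l : List V) (hnd : l.Nodup)
    (hlt : l.length < Fintype.card V) : ∃ x, x ∉ l := by
  classical
  by_contra h
  push_neg at h
  have : (Finset.univ : Finset V) ⊆ l.toFinset := fun x _ => List.mem_toFinset.2 (h x)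
  have hcard := Finset.card_le_card this
  rw [List.toFinset_card_of_nodup hnd, Finset.card_univ] at hcard
  omega

lemma step_lemma [Fintype V] (hconn : G.Connected) (l : List V) (hv : ValidL G l)
    (hne : l ≠ []) (hlt : l.length < Fintype.card V) :
    ∃ w, w ∉ l ∧ ValidL G (l ++ [w]) := by
  classical
  obtain ⟨x, hx⟩ := exists_notMem l hv.1 hlt
  obtain ⟨u, hu⟩ := List.exists_mem_of_ne_nil l hne
  obtain ⟨p⟩ := hconn.preconnected x u
  obtain ⟨a, b, ha, hb, hab⟩ := cross_of_walk G l p hx hu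
  set P : ℕ → Prop := fun i => ∃ h : i < l.length, LNew G l (l[i]'h) with hP
  obtain ⟨ia, hia, hia2⟩ := List.mem_iff_getElem.1 ha
  have hPa : P ia := ⟨hia, ⟨b, by rw [hia2]; exact hab, hb⟩⟩
  have hlen1 : 1 ≤ l.length := List.length_pos_iff.2 hne
  have hia' : ia ≤ l.length - 1 := by omega
  set i₀ := Nat.findGreatest P (l.length - 1) with hi₀
  have hPi₀ : P i₀ := Nat.findGreatest_spec hia' hPa
  obtain ⟨hi₀lt, w, hwadj, hwl⟩ := hPi₀
  have hmax : ∀ i', (h : i' < l.length) → LNew G l (l[i']'h) → i' ≤ i₀ := by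
    intro i' h hnew
    by_contra hgt
    exact Nat.findGreatest_is_greatest (P := P) (n := l.length - 1) (by omega) (by omega) ⟨h, hnew⟩
  refine ⟨w, hwl, ?_, ?_⟩
  · rw [List.nodup_append]
    exact ⟨hv.1, List.nodup_singleton w, by
      intro c hc d hd hcd
      rw [List.mem_singleton] at hd
      exact hwl (by rw [← hd, ← hcd]; exact hc)⟩
  · intro j hj hj0
    rw [List.length_append, List.length_singleton] at hj
    rcases Nat.lt_or_ge j l.length with hjl | hjl
    · -- transfer from hv
      obtain ⟨i, hij, h1, h2, h3⟩ := hv.2 j hjl hj0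
      have htake : (l ++ [w]).take j = l.take j :=
        List.take_append_of_le_length (le_of_lt hjl)
      refine ⟨i, hij, ?_, ?_, ?_⟩
      · rw [htake, List.getElem_append_left (hij.trans hjl)]; exact h1
      · intro i' hij' hnew
        refine h2 i' hij' ?_
        rw [htake, List.getElem_append_left (hij'.trans hjl)] at hnew
        exact hnew
      · rw [List.getElem_append_left (hij.trans hjl), List.getElem_append_left hjl]
        exact h3
    · have hjeq : j = l.length := by omega
      subst hjeq
      have htake : (l ++ [w]).take l.length = l := by
        rw [List.take_append_of_le_length le_rfl, List.take_length]
      refine ⟨i₀, hi₀lt, ?_, ?_, ?_⟩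
      · rw [htake, List.getElem_append_left hi₀lt]; exact ⟨w, hwadj, hwl⟩
      · intro i' hij' hnew
        rw [htake, List.getElem_append_left hij'] at hnew
        exact hmax i' hij' hnew
      · rw [List.getElem_append_left hi₀lt, List.getElem_concat_length rfl]
        exact hwadj

end DFSAux

open Classical in
noncomputable def completeL {V : Type*} [Fintype V] (G : SimpleGraph V)
    (hconn : G.Connected) : ℕ → List V → List V
  | 0, l => l
  | (k+1), l =>
    if h : ValidL G l ∧ l ≠ [] ∧ l.length < Fintype.card V then
      completeL G hconn k (l ++ [(step_lemma G hconn l h.1 h.2.1 h.2.2).choose])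
    else l

lemma completeL_spec {V : Type*} [Fintype V] (G : SimpleGraph V) (hconn : G.Connected) :
    ∀ (k : ℕ) (l : List V), ValidL G l → l ≠ [] → l.length + k = Fintype.card V →
      (completeL G hconn k l).length = Fintype.card V ∧ ValidL G (completeL G hconn k l) ∧
        l <+: completeL G hconn k l := by
  intro k
  induction k with
  | zero =>
    intro l hv hne hlen
    refine ⟨by simpa [completeL] using hlen, by simpa [completeL] using hv, ?_⟩
    simp [completeL]
  | succ k ih =>
    intro l hv hne hlen
    have hlt : l.length < Fintype.card V := by omega
    rw [completeL, dif_pos ⟨hv, hne, hlt⟩]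
    obtain ⟨hw1, hw2⟩ := (step_lemma G hconn l hv hne hlt).choose_spec
    have := ih (l ++ [(step_lemma G hconn l hv hne hlt).choose]) hw2 (by simp)
      (by rw [List.length_append, List.length_singleton]; omega)
    exact ⟨this.1, this.2.1, (List.prefix_append _ _).trans this.2.2⟩

lemma validL_isDFS {V : Type*} [Fintype V] (G : SimpleGraph V) (L : List V)
    (hlen : L.length = Fintype.card V) (hv : ValidL G L) :
    IsDFSOrder G (fun i : Fin (Fintype.card V) => L[(i : ℕ)]'(by rw [hlen]; exact i.2)) := by
  set n := Fintype.card V with hn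
  set f : Fin n → V := fun i : Fin n => L[(i : ℕ)]'(by rw [hlen]; exact i.2) with hf
  have hlenL : ∀ (j : ℕ), j < n → j < L.length := by intro j hj; omega
  constructor
  · rw [Fintype.bijective_iff_injective_and_card]
    refine ⟨?_, by simp⟩
    intro i1 i2 h
    exact Fin.ext ((hv.1.getElem_inj_iff (hi := hlenL _ i1.2) (hj := hlenL _ i2.2)).1 h)
  · intro j hj0
    obtain ⟨i, hij, h1, h2, h3⟩ := hv.2 (j : ℕ) (hlenL _ j.2) hj0
    have hin : i < n := by omega
    refine ⟨⟨i, hin⟩, hij, ?_, ?_, h3⟩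
    · obtain ⟨w, hwadj, hwnot⟩ := h1
      refine ⟨w, hwadj, ?_⟩
      intro i' hi' heq
      apply hwnot
      rw [List.mem_iff_getElem]
      refine ⟨(i' : ℕ), ?_, ?_⟩
      · rw [List.length_take]; have := hlenL _ i'.2; omega
      · rw [List.getElem_take]; exact heq
    · intro i' hi' hnew
      refine h2 (i' : ℕ) hi' ?_
      obtain ⟨w, hwadj, hwall⟩ := hnew
      refine ⟨w, hwadj, ?_⟩
      intro hmem
      rw [List.mem_iff_getElem] at hmem
      obtain ⟨k, hk, hkw⟩ := hmem
      rw [List.length_take] at hk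
      have hkn : k < n := by omega
      refine hwall ⟨k, hkn⟩ (by simpa using (by omega : k < (j : ℕ))) ?_
      rw [← hkw, List.getElem_take]

lemma dfs_pair {V : Type*} [Fintype V] (G : SimpleGraph V) (hconn : G.Connected)
    (h2 : 2 ≤ Fintype.card V) {v w : V} (hvw : G.Adj v w) :
    ∃ f : Fin (Fintype.card V) → V, IsDFSOrder G f ∧
      f ⟨0, by omega⟩ = v ∧ f ⟨1, by omega⟩ = w := by
  have hvalid : ValidL G [v, w] := by
    constructor
    · simp [hvw.ne]
    · intro j hj hj0
      have hj1 : j = 1 := by simp at hj; omega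
      subst hj1
      refine ⟨0, by omega, ?_, ?_, ?_⟩
      · exact ⟨w, by simpa using hvw, by simpa using hvw.ne'⟩
      · intro i' hi' _; omega
      · simpa using hvw
  obtain ⟨hL1, hL2, hL3⟩ := completeL_spec G hconn (Fintype.card V - 2) [v, w] hvalid
    (by simp) (by simp; omega)
  set L := completeL G hconn (Fintype.card V - 2) [v, w] with hLdef
  refine ⟨fun i : Fin (Fintype.card V) => L[(i : ℕ)]'(by rw [hL1]; exact i.2),
    validL_isDFS G L hL1 hL2, ?_, ?_⟩
  · simp only
    rw [← hL3.getElem (by simp : 0 < ([v, w] : List V).length)]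
    rfl
  · simp only
    rw [← hL3.getElem (by simp : 1 < ([v, w] : List V).length)]
    rfl

lemma exists_adj_of_ne {V : Type*} (H : SimpleGraph V) (hc : H.Connected) {v u : V}
    (hne : v ≠ u) : ∃ a, H.Adj v a := by
  obtain ⟨p⟩ := hc.preconnected v u
  cases p with
  | nil => exact absurd rfl hne
  | cons h _ => exact ⟨_, h⟩

lemma two_nbrs {V : Type*} [Fintype V] (G : SimpleGraph V) (h3 : 3 ≤ Fintype.card V)
    (hconn : G.Connected)
    (h2ec : ∀ e ∈ G.edgeSet, (G.deleteEdges {e}).Connected) (v : V) :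
    ∃ a b : V, G.Adj v a ∧ G.Adj v b ∧ a ≠ b := by
  obtain ⟨u, hu⟩ := Fintype.exists_ne_of_one_lt_card (by omega : 1 < Fintype.card V) v
  obtain ⟨a, ha⟩ := exists_adj_of_ne G hconn (Ne.symm hu)
  have he : s(v, a) ∈ G.edgeSet := ha
  obtain ⟨b, hb⟩ := exists_adj_of_ne _ (h2ec _ he) (Ne.symm hu)
  rw [SimpleGraph.deleteEdges_adj] at hb
  refine ⟨a, b, ha, hb.1, ?_⟩
  intro hab
  exact hb.2 (by rw [hab]; exact Set.mem_singleton _)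


/-- A 2-edge-connected graph on at least 3 vertices which is not a cycle
graph admits two distinct valid DFS orderings with the same end vertex. -/
theorem stmt_5 {V : Type*} [Fintype V] (G : SimpleGraph V)
    (h3 : 3 ≤ Fintype.card V) (hconn : G.Connected)
    (h2ec : ∀ e ∈ G.edgeSet, (G.deleteEdges {e}).Connected)
    (hnotcycle : ¬ ∀ v : V, (G.neighborSet v).ncard = 2) :
    ∃ f1 f2 : Fin (Fintype.card V) → V,
      IsDFSOrder G f1 ∧ IsDFSOrder G f2 ∧ f1 ≠ f2 ∧
      ∀ i : Fin (Fintype.card V), (i : ℕ) = Fintype.card V - 1 → f1 i = f2 i := by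
  classical
  have h2 : 2 ≤ Fintype.card V := by omega
  have hend : Fintype.card V - 1 < Fintype.card V := by omega
  choose a b ha hb hab using two_nbrs G h3 hconn h2ec
  have hdfs : ∀ (v w : V), G.Adj v w → ∃ f : Fin (Fintype.card V) → V, IsDFSOrder G f ∧
      f ⟨0, by omega⟩ = v ∧ f ⟨1, by omega⟩ = w := fun v w hvw => dfs_pair G hconn h2 hvw
  choose F hF1 hF2 hF3 using hdfs
  set g1 : V → Fin (Fintype.card V) → V := fun v => F v (a v) (ha v) with hg1
  set g2 : V → Fin (Fintype.card V) → V := fun v => F v (b v) (hb v) with hg2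
  set E : V × Bool → V := fun x =>
    (if x.2 then g1 x.1 else g2 x.1) ⟨Fintype.card V - 1, hend⟩ with hE
  have hninj : ¬ Function.Injective E := by
    intro hinj
    have := Fintype.card_le_of_injective E hinj
    simp [Fintype.card_prod, Fintype.card_bool] at this
    omega
  obtain ⟨⟨v, c⟩, ⟨v', c'⟩, heq, hne⟩ := Function.not_injective_iff.1 hninj
  have e0 : ∀ (v0 : V) (c0 : Bool),
      (if c0 then g1 v0 else g2 v0) ⟨0, by omega⟩ = v0 := by
    intro v0 c0; cases c0 <;> simp [hg1, hg2, hF2]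
  have e1 : ∀ (v0 : V) (c0 : Bool),
      (if c0 then g1 v0 else g2 v0) ⟨1, by omega⟩ = (if c0 then a v0 else b v0) := by
    intro v0 c0; cases c0 <;> simp [hg1, hg2, hF3]
  refine ⟨(if c then g1 v else g2 v), (if c' then g1 v' else g2 v'), ?_, ?_, ?_, ?_⟩
  · cases c <;> simp [hg1, hg2, hF1]
  · cases c' <;> simp [hg1, hg2, hF1]
  · intro hfeq
    apply hne
    have h0 := congrFun hfeq ⟨0, by omega⟩
    rw [e0, e0] at h0
    subst h0
    have hcc : c = c' := by
      by_contra hcc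
      have h1 := congrFun hfeq ⟨1, by omega⟩
      rw [e1, e1] at h1
      cases c <;> cases c' <;> simp_all
      · exact hab v h1.symm
    rw [hcc]
  · intro i hi
    have : i = ⟨Fintype.card V - 1, hend⟩ := Fin.ext (by simpa using hi)
    rw [this]
    exact heq
end

section
/- Let G be a simple graph on a finite vertex set V with |V| ≥ 3. Assume G is 2-edge-connected (G is connected and deleting any single edge of G leaves a connected graph) and G is not a cycle graph (not every vertex of G has degree exactly 2). Suppose V is partitioned into nonempty sets S and T such that exactly two edges of G have one endpoint in S and the other in T. Then the subgraph of G induced on S contains a cycle, or the subgraph of G induced on T contains a cycle. -/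
private lemma aux_sup_edge_acyclic {V : Type*} {H : SimpleGraph V} {u v : V}
    (hH : H.IsAcyclic) (hne : u ≠ v) (hnr : ¬ H.Reachable u v) :
    (H ⊔ SimpleGraph.edge u v).IsAcyclic := by
  intro a c hc
  by_cases he : s(u, v) ∈ c.edges
  · have hbr : (H ⊔ SimpleGraph.edge u v).IsBridge s(u, v) := by
      rw [SimpleGraph.isBridge_iff]
      have hHuv : ¬ H.Adj u v := fun h => hnr h.reachable
      · have hdel : (H ⊔ SimpleGraph.edge u v) \ SimpleGraph.fromEdgeSet {s(u, v)} = H := by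
          ext a b
          simp only [SimpleGraph.sdiff_adj, SimpleGraph.sup_adj, SimpleGraph.edge_adj,
            SimpleGraph.fromEdgeSet_adj, Set.mem_singleton_iff, Sym2.eq_iff]
          constructor
          · rintro ⟨h1 | ⟨h2, h3⟩, h4⟩
            · exact h1
            · exact absurd ⟨by tauto, h3⟩ h4
          · intro h
            refine ⟨Or.inl h, ?_⟩
            rintro ⟨⟨rfl, rfl⟩ | ⟨rfl, rfl⟩, -⟩
            · exact hnr h.reachable
            · exact hnr h.symm.reachable
        rw [SimpleGraph.deleteEdges, hdel]
        exact hnr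
    rw [SimpleGraph.isBridge_iff_adj_and_forall_cycle_notMem (c.edges_subset_edgeSet he)] at hbr
    exact hbr c hc he
  · have hsub : ∀ e ∈ c.edges, e ∈ H.edgeSet := by
      intro e heM
      have h1 := c.edges_subset_edgeSet heM
      rw [SimpleGraph.edgeSet_sup, SimpleGraph.edge_edgeSet_of_ne hne] at h1
      rcases h1 with h1 | h1
      · exact h1
      · exact absurd (h1 ▸ heM) he
    exact hH (c.transfer H hsub) (hc.transfer hsub)

private lemma aux_acyclic_card {V : Type*} [Fintype V] [Nonempty V] (G : SimpleGraph V)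
    (hG : G.IsAcyclic) : G.edgeSet.ncard + 1 ≤ Fintype.card V := by
  classical
  obtain ⟨H, hmem, hmax⟩ :
      ∃ H ∈ Finset.univ.filter (fun H : SimpleGraph V => G ≤ H ∧ H.IsAcyclic),
        ∀ H' ∈ Finset.univ.filter (fun H : SimpleGraph V => G ≤ H ∧ H.IsAcyclic),
          H'.edgeSet.ncard ≤ H.edgeSet.ncard := by
    apply Finset.exists_max_image
    exact ⟨G, by simp [hG]⟩
  simp only [Finset.mem_filter, Finset.mem_univ, true_and] at hmem hmax
  obtain ⟨hle, hac⟩ := hmem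
  have hconn : H.Connected := by
    rw [SimpleGraph.connected_iff]
    refine ⟨fun x y => ?_, inferInstance⟩
    by_contra hnr
    have hne : x ≠ y := fun h => hnr (h ▸ SimpleGraph.Reachable.refl x)
    have hac' := aux_sup_edge_acyclic hac hne hnr
    have hlt : H.edgeSet.ncard < (H ⊔ SimpleGraph.edge x y).edgeSet.ncard := by
      apply Set.ncard_lt_ncard _ (Set.toFinite _)
      constructor
      · exact SimpleGraph.edgeSet_mono le_sup_left
      · intro hsub
        have : s(x, y) ∈ H.edgeSet := hsub (by
          rw [SimpleGraph.edgeSet_sup, SimpleGraph.edge_edgeSet_of_ne hne]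
          exact Or.inr rfl)
        rw [SimpleGraph.mem_edgeSet] at this
        exact hnr this.reachable
    exact absurd (hmax _ ⟨le_trans hle le_sup_left, hac'⟩) (not_le.mpr hlt)
  have htree : H.IsTree := ⟨hconn, hac⟩
  have hcard := htree.card_edgeFinset
  have h1 : G.edgeSet.ncard ≤ H.edgeSet.ncard :=
    Set.ncard_le_ncard (SimpleGraph.edgeSet_mono hle) (Set.toFinite _)
  have h2 : H.edgeSet.ncard = H.edgeFinset.card := by
    rw [Set.ncard_eq_toFinset_card']
    simp [SimpleGraph.edgeFinset]
  have h3 : 1 ≤ Fintype.card V := Fintype.card_pos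
  omega

private lemma aux_induce_edges {V : Type*} (G : SimpleGraph V) (S : Set V) :
    {e | e ∈ G.edgeSet ∧ ∀ x ∈ e, x ∈ S} =
      Sym2.map (Subtype.val : S → V) '' (G.induce S).edgeSet := by
  ext e
  induction e using Sym2.ind with
  | _ a b =>
    constructor
    · rintro ⟨hE, hS⟩
      have ha : a ∈ S := hS a (by simp)
      have hb : b ∈ S := hS b (by simp)
      refine ⟨s(⟨a, ha⟩, ⟨b, hb⟩), ?_, by simp⟩
      simpa using hE
    · rintro ⟨e', he', heq⟩
      induction e' using Sym2.ind with
      | _ x y =>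
        rw [Sym2.map_pair_eq] at heq
        rw [← heq]
        simp only [SimpleGraph.mem_edgeSet, SimpleGraph.comap_adj] at he'
        refine ⟨?_, ?_⟩
        · simpa using he'
        · intro z hz
          rw [Sym2.mem_iff] at hz
          rcases hz with rfl | rfl
          · exact x.2
          · exact y.2

private lemma aux_min_degree {V : Type*} [Fintype V] [DecidableEq V]
    (G : SimpleGraph V) [DecidableRel G.Adj]
    (h3 : 3 ≤ Fintype.card V) (hconn : G.Connected)
    (h2ec : ∀ e ∈ G.edgeSet, (G.deleteEdges {e}).Connected) (v : V) :
    2 ≤ G.degree v := by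
  obtain ⟨u, hu⟩ : ∃ u : V, u ≠ v := Fintype.exists_ne_of_one_lt_card (by omega) v
  have hadj : ∃ w, G.Adj v w := by
    obtain ⟨p⟩ := hconn.preconnected v u
    cases p with
    | nil => exact absurd rfl hu
    | cons h _ => exact ⟨_, h⟩
  have h1 : 1 ≤ G.degree v := by
    rw [Nat.one_le_iff_ne_zero, ← Nat.pos_iff_ne_zero, SimpleGraph.degree_pos_iff_exists_adj]
    exact hadj
  rcases Nat.lt_or_ge (G.degree v) 2 with hlt | hge
  · exfalso
    have hd1 : G.degree v = 1 := by omega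
    obtain ⟨w, hw⟩ := Finset.card_eq_one.mp hd1
    have hvw : G.Adj v w := by
      have : w ∈ G.neighborFinset v := by rw [hw]; exact Finset.mem_singleton_self w
      rwa [SimpleGraph.mem_neighborFinset] at this
    have hconn' := h2ec s(v, w) (G.mem_edgeSet.mpr hvw)
    obtain ⟨u', hu'⟩ : ∃ u' : V, u' ≠ v := ⟨u, hu⟩
    obtain ⟨p⟩ := hconn'.preconnected v u'
    cases p with
    | nil => exact absurd rfl hu'
    | cons h _ =>
      rw [SimpleGraph.deleteEdges_adj] at h
      obtain ⟨hadj', hne⟩ := h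
      have : _ ∈ G.neighborFinset v := (SimpleGraph.mem_neighborFinset _ _ _).mpr hadj'
      rw [hw, Finset.mem_singleton] at this
      exact hne (by rw [this]; rfl)
  · exact hge

/-- Let `G` be 2-edge-connected on at least 3 vertices and not a cycle graph.
If `V` is partitioned into nonempty sets `S` and `T` with exactly two edges of `G` crossing
between them, then `G[S]` or `G[T]` contains a cycle. -/
theorem stmt_7 {V : Type*} [Fintype V] (G : SimpleGraph V)
    (h3 : 3 ≤ Fintype.card V) (hconn : G.Connected)
    (h2ec : ∀ e ∈ G.edgeSet, (G.deleteEdges {e}).Connected)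
    (hnotcycle : ¬ ∀ v : V, (G.neighborSet v).ncard = 2)
    (S T : Set V) (hSne : S.Nonempty) (hTne : T.Nonempty)
    (hdisj : S ∩ T = ∅) (hcover : S ∪ T = Set.univ)
    (hcross : {e : Sym2 V | e ∈ G.edgeSet ∧ ∃ a ∈ S, ∃ b ∈ T, e = s(a, b)}.ncard = 2) :
    ¬ (G.induce S).IsAcyclic ∨ ¬ (G.induce T).IsAcyclic := by
  classical
  by_contra hcon
  push_neg at hcon
  obtain ⟨hSa, hTa⟩ := hcon
  haveI : Nonempty ↥S := hSne.to_subtype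
  haveI : Nonempty ↥T := hTne.to_subtype
  haveI : Fintype ↥S := Fintype.ofFinite _
  haveI : Fintype ↥T := Fintype.ofFinite _
  -- vertex count
  have hcardS : Fintype.card ↥S = S.ncard := by
    rw [← Nat.card_eq_fintype_card, Nat.card_coe_set_eq]
  have hcardT : Fintype.card ↥T = T.ncard := by
    rw [← Nat.card_eq_fintype_card, Nat.card_coe_set_eq]
  have hST : S.ncard + T.ncard = Fintype.card V := by
    have hd : Disjoint S T := Set.disjoint_iff_inter_eq_empty.mpr hdisj
    have := Set.ncard_union_eq hd (Set.toFinite S) (Set.toFinite T)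
    rw [hcover, Set.ncard_univ, Nat.card_eq_fintype_card] at this
    omega
  -- edge sets inside S and T
  set ES : Set (Sym2 V) := {e | e ∈ G.edgeSet ∧ ∀ x ∈ e, x ∈ S} with hESdef
  set ET : Set (Sym2 V) := {e | e ∈ G.edgeSet ∧ ∀ x ∈ e, x ∈ T} with hETdef
  set EC : Set (Sym2 V) := {e : Sym2 V | e ∈ G.edgeSet ∧ ∃ a ∈ S, ∃ b ∈ T, e = s(a, b)}
    with hECdef
  have hES : ES.ncard + 1 ≤ S.ncard := by
    have h1 := aux_acyclic_card (G.induce S) hSa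
    rw [hcardS] at h1
    have h2 : ES.ncard = (G.induce S).edgeSet.ncard := by
      rw [hESdef, aux_induce_edges,
        Set.ncard_image_of_injective _ (Sym2.map.injective Subtype.val_injective)]
    omega
  have hET : ET.ncard + 1 ≤ T.ncard := by
    have h1 := aux_acyclic_card (G.induce T) hTa
    rw [hcardT] at h1
    have h2 : ET.ncard = (G.induce T).edgeSet.ncard := by
      rw [hETdef, aux_induce_edges,
        Set.ncard_image_of_injective _ (Sym2.map.injective Subtype.val_injective)]
    omega
  have hST' : ∀ x : V, x ∈ S → x ∈ T → False := by
    intro x hxS hxT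
    have : x ∈ S ∩ T := ⟨hxS, hxT⟩
    rw [hdisj] at this
    exact this
  -- partition of the edge set
  have hunion : G.edgeSet = (ES ∪ ET) ∪ EC := by
    ext e
    induction e using Sym2.ind with
    | _ a b =>
      constructor
      · intro he
        have ha : a ∈ S ∪ T := hcover ▸ Set.mem_univ a
        have hb : b ∈ S ∪ T := hcover ▸ Set.mem_univ b
        have hmem : ∀ z : V, z ∈ (s(a,b) : Sym2 V) → z = a ∨ z = b := by
          intro z hz; rwa [Sym2.mem_iff] at hz
        rcases ha with ha | ha <;> rcases hb with hb | hb
        · refine Or.inl (Or.inl ⟨he, fun z hz => ?_⟩)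
          rcases hmem z hz with rfl | rfl <;> assumption
        · exact Or.inr ⟨he, a, ha, b, hb, rfl⟩
        · exact Or.inr ⟨he, b, hb, a, ha, Sym2.eq_swap.symm⟩
        · refine Or.inl (Or.inr ⟨he, fun z hz => ?_⟩)
          rcases hmem z hz with rfl | rfl <;> assumption
      · rintro ((⟨he, -⟩ | ⟨he, -⟩) | ⟨he, -⟩) <;> exact he
  have hd1 : Disjoint ES ET := by
    rw [Set.disjoint_left]
    rintro e ⟨he, hS⟩ ⟨-, hT⟩
    induction e using Sym2.ind with
    | _ a b =>
      exact hST' a (hS a (by simp)) (hT a (by simp))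
  have hd2 : Disjoint (ES ∪ ET) EC := by
    rw [Set.disjoint_left]
    rintro e (⟨-, hS⟩ | ⟨-, hT⟩) ⟨-, a, ha, b, hb, rfl⟩
    · exact hST' b (hS b (by simp)) hb
    · exact hST' a ha (hT a (by simp))
  have hEcount : G.edgeSet.ncard = ES.ncard + ET.ncard + 2 := by
    rw [hunion, Set.ncard_union_eq hd2 (Set.toFinite _) (Set.toFinite _),
      Set.ncard_union_eq hd1 (Set.toFinite _) (Set.toFinite _), hcross]
  -- degree bound
  have hdeg : ∀ v : V, 2 ≤ G.degree v := fun v =>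
    aux_min_degree G h3 hconn h2ec v
  have hEfin : G.edgeSet.ncard = G.edgeFinset.card := by
    rw [← Nat.card_eq_fintype_card, Nat.card_coe_set_eq] at *
    rw [SimpleGraph.edgeFinset_card, ← Nat.card_eq_fintype_card, Nat.card_coe_set_eq]
  have hsum : ∑ v : V, G.degree v = 2 * G.edgeFinset.card :=
    SimpleGraph.sum_degrees_eq_twice_card_edges G
  have hge : Fintype.card V * 2 ≤ ∑ v : V, G.degree v := by
    calc Fintype.card V * 2 = ∑ _v : V, 2 := by
          rw [Finset.sum_const, smul_eq_mul, Finset.card_univ]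
      _ ≤ ∑ v : V, G.degree v := Finset.sum_le_sum (fun v _ => hdeg v)
  -- conclude all degrees are 2
  have hEeq : G.edgeFinset.card = Fintype.card V := by omega
  obtain ⟨v, hv⟩ := not_forall.mp hnotcycle
  have hvdeg : G.degree v ≠ 2 := by
    intro h
    apply hv
    rw [← Nat.card_coe_set_eq, Nat.card_eq_fintype_card,
      SimpleGraph.card_neighborSet_eq_degree, h]
  have hlt : (∑ _v : V, 2) < ∑ v : V, G.degree v := by
    apply Finset.sum_lt_sum (fun w _ => hdeg w)
    exact ⟨v, Finset.mem_univ v, lt_of_le_of_ne (hdeg v) (Ne.symm hvdeg)⟩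
  rw [Finset.sum_const, smul_eq_mul, Finset.card_univ] at hlt
  omega
end

section
/- Let G be a connected simple graph on a finite vertex set V with |V| = n ≥ 2, and let r be a vertex of G. Then G has exactly one valid DFS ordering starting at r if and only if G is a path graph with endpoint r, i.e., the vertices of G can be enumerated w_1, …, w_n with w_1 = r such that the edge set of G is exactly {{w_j, w_{j+1}} : 1 ≤ j < n}. -/
/-- `H` is a path graph with endpoint `r`: its vertices can be enumerated `w 0, …, w (m-1)`
with `w 0 = r` such that the edges of `H` are exactly the pairs of consecutive vertices of
the enumeration. -/
def IsPathGraphFrom {α : Type*} (H : SimpleGraph α) (r : α) : Prop :=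
  ∃ (m : ℕ) (w : Fin m → α), Function.Bijective w ∧
    (∀ i : Fin m, (i : ℕ) = 0 → w i = r) ∧
    ∀ a b : α, H.Adj a b ↔
      ∃ (j : Fin m) (hj : (j : ℕ) + 1 < m),
        (w j = a ∧ w ⟨(j : ℕ) + 1, hj⟩ = b) ∨ (w j = b ∧ w ⟨(j : ℕ) + 1, hj⟩ = a)

/-!
A DFS ordering can always be completed greedily from any valid prefix, since connectivity
guarantees a visited vertex with an unvisited neighbour as long as some vertex is unvisited. If a DFS ordering `f` had an
edge `f p — f q` with `p + 1 < q`, then after visiting `f 0, …, f p` the search could step to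
`f q` instead of `f (p + 1)` and be completed to a second DFS ordering with the same start.
So a unique DFS ordering has only edges between consecutive vertices, and each consecutive
pair is an edge because `f (j + 1)` is adjacent to an earlier vertex; that is, `G` is a path.
Conversely, on a path starting at `r` every DFS ordering must step to the next vertex of the
path, the only unvisited vertex adjacent to the visited ones.
-/

section DFSOrder

variable {V : Type*} {G : SimpleGraph V} {n : ℕ}

/-- The search resumes after `f 0, …, f (k - 1)` from `f i`. -/
def IsMaxActive (G : SimpleGraph V) (f : Fin n → V) (k : ℕ) (i : Fin n) : Prop :=
  (i : ℕ) < k ∧ HasNewNbr G f k i ∧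
    ∀ i' : Fin n, (i' : ℕ) < k → HasNewNbr G f k i' → (i' : ℕ) ≤ i

def DFSStep (G : SimpleGraph V) (f : Fin n → V) (j : Fin n) : Prop :=
  ∃ i : Fin n, IsMaxActive G f j i ∧ G.Adj (f i) (f j)

def IsDFSPrefix (G : SimpleGraph V) (f : Fin n → V) (k : ℕ) : Prop :=
  Set.InjOn f {i | (i : ℕ) < k} ∧ ∀ j : Fin n, 0 < (j : ℕ) → (j : ℕ) < k → DFSStep G f j

lemma isDFSOrder_iff {f : Fin n → V} :
    IsDFSOrder G f ↔ Function.Bijective f ∧ ∀ j : Fin n, 0 < (j : ℕ) → DFSStep G f j := by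
  simp only [IsDFSOrder, DFSStep, IsMaxActive, and_assoc]

lemma hasNewNbr_congr {f f' : Fin n → V} {k : ℕ} {i : Fin n}
    (h : ∀ i' : Fin n, (i' : ℕ) < k → f i' = f' i') (hi : f i = f' i) :
    HasNewNbr G f k i ↔ HasNewNbr G f' k i := by
  unfold HasNewNbr
  rw [hi]
  exact exists_congr fun w => and_congr_right fun _ =>
    forall_congr' fun i' => imp_congr_right fun hi' => by rw [h i' hi']

lemma isMaxActive_congr {f f' : Fin n → V} {k : ℕ} {i : Fin n}
    (h : ∀ i' : Fin n, (i' : ℕ) < k → f i' = f' i') :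
    IsMaxActive G f k i ↔ IsMaxActive G f' k i :=
  and_congr_right fun hi => and_congr (hasNewNbr_congr h (h i hi)) <|
    forall_congr' fun i' => imp_congr_right fun hi' =>
      imp_congr_left (hasNewNbr_congr h (h i' hi'))

lemma dfsStep_congr {f f' : Fin n → V} {j : Fin n}
    (h : ∀ i' : Fin n, (i' : ℕ) ≤ j → f i' = f' i') (hf : DFSStep G f j) : DFSStep G f' j := by
  obtain ⟨i, hi, hij⟩ := hf
  refine ⟨i, (isMaxActive_congr fun i' hi' => h i' hi'.le).1 hi, ?_⟩
  rwa [← h i hi.1.le, ← h j le_rfl]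

lemma IsDFSOrder.isDFSPrefix {f : Fin n → V} (hf : IsDFSOrder G f) (k : ℕ) :
    IsDFSPrefix G f k :=
  ⟨hf.1.1.injOn, fun j hj _ => (isDFSOrder_iff.1 hf).2 j hj⟩

lemma IsDFSPrefix.mono {f : Fin n → V} {k k' : ℕ} (hf : IsDFSPrefix G f k') (h : k ≤ k') :
    IsDFSPrefix G f k :=
  ⟨hf.1.mono fun _ hi => lt_of_lt_of_le hi h, fun j hj hjk => hf.2 j hj (lt_of_lt_of_le hjk h)⟩

lemma IsDFSPrefix.isDFSOrder [Fintype V] (hn : Fintype.card V = n) {f : Fin n → V}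
    (hf : IsDFSPrefix G f n) : IsDFSOrder G f := by
  have hinj : Function.Injective f := fun a b hab => hf.1 a.isLt b.isLt hab
  refine isDFSOrder_iff.2 ⟨(Fintype.bijective_iff_injective_and_card f).2 ⟨hinj, by simp [hn]⟩,
    fun j hj => hf.2 j hj j.isLt⟩

lemma exists_hasNewNbr [Fintype V] (hG : G.Connected) (hn : Fintype.card V = n)
    (f : Fin n → V) {k : ℕ} (hk : 0 < k) (hkn : k < n) :
    ∃ i : Fin n, (i : ℕ) < k ∧ HasNewNbr G f k i := by
  obtain ⟨u, hu⟩ : ∃ u : V, ∀ i : Fin n, (i : ℕ) < k → f i ≠ u := by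
    by_contra! h
    have hsurj : Function.Surjective fun i : Fin k => f (Fin.castLE hkn.le i) := fun u =>
      let ⟨i, hi, hiu⟩ := h u
      ⟨⟨i, hi⟩, hiu⟩
    have := Fintype.card_le_of_surjective _ hsurj
    simp only [Fintype.card_fin] at this
    omega
  let S : Set V := {v | ∃ i : Fin n, (i : ℕ) < k ∧ f i = v}
  obtain ⟨d, -, ⟨i, hik, hid⟩, hdS⟩ :=
    (hG.preconnected (f ⟨0, by omega⟩) u).some.exists_boundary_dart S ⟨_, hk, rfl⟩
      fun ⟨i, hi, hiu⟩ => hu i hi hiu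
  exact ⟨i, hik, d.snd, hid ▸ d.adj, fun i' hi' h => hdS ⟨i', hi', h⟩⟩

lemma exists_isMaxActive {f : Fin n → V} {k : ℕ}
    (h : ∃ i : Fin n, (i : ℕ) < k ∧ HasNewNbr G f k i) : ∃ i, IsMaxActive G f k i := by
  classical
  obtain ⟨i, hi, hmax⟩ := Finset.exists_max_image
    (Finset.univ.filter fun i : Fin n => (i : ℕ) < k ∧ HasNewNbr G f k i) (fun i => (i : ℕ))
    (h.imp fun i hi => by simpa using hi)
  simp only [Finset.mem_filter, Finset.mem_univ, true_and] at hi hmax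
  exact ⟨i, hi.1, hi.2, fun i' h1 h2 => hmax i' ⟨h1, h2⟩⟩

lemma IsDFSPrefix.update {f : Fin n → V} {k : ℕ} (hf : IsDFSPrefix G f k) (hkn : k < n)
    {i : Fin n} (hi : IsMaxActive G f k i) {w : V} (hw : G.Adj (f i) w)
    (hnew : ∀ i' : Fin n, (i' : ℕ) < k → f i' ≠ w) :
    IsDFSPrefix G (Function.update f ⟨k, hkn⟩ w) (k + 1) := by
  set g := Function.update f ⟨k, hkn⟩ w
  have hgf : ∀ i' : Fin n, (i' : ℕ) < k → g i' = f i' := fun i' hi' =>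
    Function.update_of_ne (Fin.ne_of_val_ne hi'.ne) _ _
  have hgk : g ⟨k, hkn⟩ = w := Function.update_self _ _ _
  have hcases : ∀ a : Fin n, (a : ℕ) < k + 1 → (a : ℕ) < k ∨ a = ⟨k, hkn⟩ := fun a ha =>
    (Nat.lt_succ_iff_lt_or_eq.1 ha).imp_right Fin.ext
  constructor
  · intro a ha b hb hab
    rcases hcases a ha with ha | rfl <;> rcases hcases b hb with hb | rfl
    · rw [hgf a ha, hgf b hb] at hab
      exact hf.1 ha hb hab
    · exact absurd (hgk ▸ hgf a ha ▸ hab) (hnew a ha)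
    · exact absurd (hgk ▸ hgf b hb ▸ hab.symm) (hnew b hb)
    · rfl
  · intro j hj0 hjk
    rcases hcases j hjk with hjk | rfl
    · exact dfsStep_congr (fun i' hi' => (hgf i' (lt_of_le_of_lt hi' hjk)).symm)
        (hf.2 j hj0 hjk)
    · refine ⟨i, (isMaxActive_congr fun i' hi' => (hgf i' hi').symm).1 hi, ?_⟩
      rwa [hgf i hi.1, hgk]

lemma IsDFSPrefix.exists_isDFSOrder [Fintype V] (hG : G.Connected) (hn : Fintype.card V = n)
    {f : Fin n → V} {k : ℕ} (hk : 0 < k) (hf : IsDFSPrefix G f k) :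
    ∃ g, IsDFSOrder G g ∧ ∀ i : Fin n, (i : ℕ) < k → g i = f i := by
  induction hd : n - k generalizing k f with
  | zero => exact ⟨f, (hf.mono (by omega)).isDFSOrder hn, fun _ _ => rfl⟩
  | succ d ih =>
    have hkn : k < n := by omega
    obtain ⟨i, hi⟩ := exists_isMaxActive (exists_hasNewNbr hG hn f hk hkn)
    obtain ⟨w, hw, hnew⟩ := hi.2.1
    obtain ⟨g, hg, hgf⟩ := ih (Nat.succ_pos k) (hf.update hkn hi hw hnew) (by omega)
    exact ⟨g, hg, fun i' hi' => (hgf i' (by omega)).trans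
      (Function.update_of_ne (Fin.ne_of_val_ne hi'.ne) _ _)⟩

lemma IsDFSOrder.exists_ne_of_adj [Fintype V] (hG : G.Connected) (hn : Fintype.card V = n)
    {f : Fin n → V} (hf : IsDFSOrder G f) {p q : Fin n} (hpq : (p : ℕ) + 1 < q)
    (hadj : G.Adj (f p) (f q)) :
    ∃ g, IsDFSOrder G g ∧ (∀ i : Fin n, (i : ℕ) ≤ p → g i = f i) ∧ g ≠ f := by
  have hkn : (p : ℕ) + 1 < n := hpq.trans q.isLt
  set K : Fin n := ⟨p + 1, hkn⟩
  have hqnew : ∀ i' : Fin n, (i' : ℕ) < p + 1 → f i' ≠ f q := fun i' hi' h => by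
    have := congrArg Fin.val (hf.1.1 h)
    omega
  obtain ⟨i, hi, -⟩ := (isDFSOrder_iff.1 hf).2 K (Nat.succ_pos _)
  obtain rfl : i = p := Fin.ext <| le_antisymm (Nat.lt_succ_iff.1 hi.1)
    (hi.2.2 p (Nat.lt_succ_self _) ⟨f q, hadj, hqnew⟩)
  obtain ⟨g, hg, hgf⟩ :=
    ((hf.isDFSPrefix _).update hkn hi hadj hqnew).exists_isDFSOrder hG hn (Nat.succ_pos _)
  refine ⟨g, hg, fun i' hi' => (hgf i' (by omega)).trans
    (Function.update_of_ne (Fin.ne_of_val_ne (by simp; omega)) _ _), fun hgf' => ?_⟩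
  have hKq : g K = f q := by
    rw [hgf K (by simp [K]), Function.update_self]
  rw [hgf'] at hKq
  have := congrArg Fin.val (hf.1.1 hKq)
  simp only [K] at this
  omega

lemma IsDFSOrder.adj_iff_of_forall_not_adj {f : Fin n → V} (hf : IsDFSOrder G f)
    (hfar : ∀ p q : Fin n, (p : ℕ) + 1 < q → ¬ G.Adj (f p) (f q)) (a b : Fin n) :
    G.Adj (f a) (f b) ↔ (a : ℕ) + 1 = b ∨ (b : ℕ) + 1 = a := by
  have hcons : ∀ a b : Fin n, (a : ℕ) + 1 = b → G.Adj (f a) (f b) := by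
    intro a b hab
    obtain ⟨i, hi, hib⟩ := (isDFSOrder_iff.1 hf).2 b (by omega)
    obtain rfl : i = a := Fin.ext <| by
      by_contra h
      exact hfar i b (by have := hi.1; omega) hib
    exact hib
  constructor
  · intro h
    have hab : (a : ℕ) ≠ b := fun e => h.ne (congrArg f (Fin.ext e))
    have h₁ := mt (hfar a b) (not_not.2 h)
    have h₂ := mt (hfar b a) (not_not.2 h.symm)
    omega
  · rintro (h | h)
    · exact hcons a b h
    · exact (hcons b a h).symm

lemma isPathGraphFrom_iff {r : V} :
    IsPathGraphFrom G r ↔ ∃ (m : ℕ) (w : Fin m → V), Function.Bijective w ∧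
      (∀ i : Fin m, (i : ℕ) = 0 → w i = r) ∧
      ∀ a b : Fin m, G.Adj (w a) (w b) ↔ (a : ℕ) + 1 = b ∨ (b : ℕ) + 1 = a := by
  refine exists_congr fun m => exists_congr fun w => and_congr_right fun hw =>
    and_congr_right fun _ => ?_
  rw [hw.surjective.forall₂]
  refine forall₂_congr fun a b => iff_congr Iff.rfl ?_
  simp only [hw.injective.eq_iff, Fin.ext_iff]
  constructor
  · rintro ⟨j, -, ⟨h₁, h₂⟩ | ⟨h₁, h₂⟩⟩ <;> omega
  · rintro (h | h)
    · exact ⟨a, by omega, Or.inl ⟨rfl, h⟩⟩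
    · exact ⟨b, by omega, Or.inr ⟨rfl, h⟩⟩

lemma isDFSOrder_of_adj_iff {w : Fin n → V} (hw : Function.Bijective w)
    (hadj : ∀ a b : Fin n, G.Adj (w a) (w b) ↔ (a : ℕ) + 1 = b ∨ (b : ℕ) + 1 = a) :
    IsDFSOrder G w := by
  refine isDFSOrder_iff.2 ⟨hw, fun j hj => ?_⟩
  have hj' : (j : ℕ) - 1 < n := by omega
  have hprev : G.Adj (w ⟨j - 1, hj'⟩) (w j) := (hadj _ _).2 (Or.inl (by simp only; omega))
  refine ⟨⟨j - 1, hj'⟩, ⟨by simp only; omega, ⟨w j, hprev, fun i hi h => ?_⟩,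
    fun i hi _ => by simp only; omega⟩, hprev⟩
  exact hi.ne (congrArg Fin.val (hw.injective h))

lemma eq_of_isDFSOrder_of_adj_iff {w g : Fin n → V} (hw : Function.Bijective w)
    (hadj : ∀ a b : Fin n, G.Adj (w a) (w b) ↔ (a : ℕ) + 1 = b ∨ (b : ℕ) + 1 = a)
    (hg : IsDFSOrder G g) (h0 : ∀ i : Fin n, (i : ℕ) = 0 → g i = w i) : g = w := by
  funext j
  induction j using WellFoundedLT.induction with
  | _ j ih =>
  rcases Nat.eq_zero_or_pos j with hj | hj
  · exact h0 j hj
  obtain ⟨i, hi, hij⟩ := (isDFSOrder_iff.1 hg).2 j hj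
  obtain ⟨t, ht⟩ := hw.2 (g j)
  rw [ih i hi.1, ← ht, hadj] at hij
  have htj : ¬ (t : ℕ) < j := fun htj => by
    have := congrArg Fin.val (hg.1.1 (ht.symm.trans (ih t htj).symm))
    omega
  rw [← ht]
  exact congrArg w (Fin.ext (by have := hi.1; omega))

end DFSOrder

theorem stmt_8_general {V : Type*} [Fintype V] (G : SimpleGraph V) (hG : G.Connected)
    {n : ℕ} (hn : Fintype.card V = n) (r : V) :
    (∃! f : Fin n → V, IsDFSOrder G f ∧ ∀ i : Fin n, (i : ℕ) = 0 → f i = r) ↔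
      IsPathGraphFrom G r := by
  rw [isPathGraphFrom_iff]
  constructor
  · rintro ⟨f, ⟨hf, hf0⟩, huniq⟩
    refine ⟨n, f, hf.1, hf0, hf.adj_iff_of_forall_not_adj fun p q hpq hadj => ?_⟩
    obtain ⟨g, hg, hgf, hne⟩ := hf.exists_ne_of_adj hG hn hpq hadj
    exact hne (huniq g ⟨hg, fun i hi => (hgf i (by omega)).trans (hf0 i hi)⟩)
  · rintro ⟨m, w, hw, hw0, hadj⟩
    obtain rfl : m = n := by simpa [hn] using Fintype.card_of_bijective hw
    exact ⟨w, ⟨isDFSOrder_of_adj_iff hw hadj, hw0⟩, fun g ⟨hg, hg0⟩ =>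
      eq_of_isDFSOrder_of_adj_iff hw hadj hg fun i hi => (hg0 i hi).trans (hw0 i hi).symm⟩

/-- A connected graph `G` on `n ≥ 2` vertices has exactly one valid DFS
ordering starting at a vertex `r` if and only if `G` is a path graph with endpoint `r`. -/
theorem stmt_8 {V : Type*} [Fintype V] (G : SimpleGraph V) (hG : G.Connected)
    {n : ℕ} (hn : Fintype.card V = n) (hn2 : 2 ≤ n) (r : V) :
    (∃! f : Fin n → V, IsDFSOrder G f ∧ ∀ i : Fin n, (i : ℕ) = 0 → f i = r) ↔
      IsPathGraphFrom G r :=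
  stmt_8_general G hG hn r
end

section
/- Let G be a connected simple graph on a finite vertex set V, let {u, v} be a bridge of G, let S be the vertex set of the connected component of u in the graph obtained from G by deleting {u, v}, and let T = V \ S (the component of v). Assume |T| ≥ 2 and assume the induced subgraph G[S] is not a path graph with endpoint u (in particular this holds whenever |S| ≥ 2 and G[S] is not a path graph with endpoint u). Then G admits two distinct valid DFS orderings with the same start vertex and the same end vertex. -/
section DFSList

variable {V : Type*}

/-- `a` has a `G`-neighbor outside the first `j` entries of `l`. -/
def NbrOK (G : SimpleGraph V) (l : List V) (j : ℕ) (a : V) : Prop :=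
  ∃ w, G.Adj a w ∧ w ∉ l.take j

/-- list version of a valid DFS ordering (possibly partial). -/
def IsDFSL (G : SimpleGraph V) (l : List V) : Prop :=
  l.Nodup ∧ ∀ j : ℕ, ∀ hj : j < l.length, 0 < j →
    ∃ i : ℕ, ∃ hij : i < j,
      NbrOK G l j (l[i]'(by omega)) ∧
      (∀ i' : ℕ, ∀ hi' : i' < j, NbrOK G l j (l[i']'(by omega)) → i' ≤ i) ∧
      G.Adj (l[i]'(by omega)) (l[j]'hj)

lemma mem_take_iff {l : List V} {j : ℕ} {w : V} :
    w ∈ l.take j ↔ ∃ i : ℕ, ∃ h : i < l.length, i < j ∧ l[i] = w := by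
  rw [List.mem_iff_getElem]
  constructor
  · rintro ⟨i, h, rfl⟩
    have hlen : i < j ⊓ l.length := by simpa using h
    exact ⟨i, by omega, by omega, List.getElem_take.symm⟩
  · rintro ⟨i, h, hij, rfl⟩
    exact ⟨i, by simpa using And.intro hij h, List.getElem_take⟩

lemma nbrOK_congr {G : SimpleGraph V} {l l' : List V} {j : ℕ} {a : V}
    (h : l.take j = l'.take j) : NbrOK G l j a ↔ NbrOK G l' j a := by
  unfold NbrOK; rw [h]

lemma isDFSL_take {G : SimpleGraph V} {l : List V} (hl : IsDFSL G l) (k : ℕ) :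
    IsDFSL G (l.take k) := by
  obtain ⟨hnd, hstep⟩ := hl
  refine ⟨hnd.sublist (l.take_sublist k) , ?_⟩
  intro j hj h0
  have hjk : j < k ⊓ l.length := by simpa using hj
  have htk : ∀ m ≤ k, (l.take k).take m = l.take m := by
    intro m hm; rw [List.take_take, inf_eq_left.2 hm]
  obtain ⟨i, hij, hnbr, hmax, hadj⟩ := hstep j (by omega) h0
  refine ⟨i, hij, ?_, ?_, ?_⟩
  · rw [nbrOK_congr (htk j (by omega))]
    simpa only [List.getElem_take] using hnbr
  · intro i' hi' hnb
    refine hmax i' hi' ?_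
    rw [← nbrOK_congr (htk j (by omega))]
    simpa only [List.getElem_take] using hnb
  · simpa only [List.getElem_take] using hadj

lemma mem_of_reachable {G : SimpleGraph V} {R : Set V}
    (hcl : ∀ ⦃x y⦄, x ∈ R → G.Adj x y → y ∈ R) {a b : V}
    (ha : a ∈ R) (h : G.Reachable a b) : b ∈ R := by
  obtain ⟨p⟩ := h
  revert ha
  induction p with
  | nil => exact id
  | cons h q ih => exact fun ha => ih (hcl ha h)


/-- one greedy DFS step -/
lemma exists_step [Fintype V] {G : SimpleGraph V} (hc : G.Connected) {l : List V}
    (hl : IsDFSL G l) (hne : l ≠ []) (hlt : l.length < Fintype.card V) :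
    ∃ w : V, w ∉ l ∧ IsDFSL G (l ++ [w]) := by
  classical
  obtain ⟨hnd, hstep⟩ := hl
  -- some vertex not in l
  have hx : ∃ x, x ∉ l := by
    by_contra hcon
    push_neg at hcon
    have : (Finset.univ : Finset V).card ≤ l.toFinset.card :=
      Finset.card_le_card (fun x _ => List.mem_toFinset.2 (hcon x))
    rw [List.toFinset_card_of_nodup hnd] at this
    simp only [Finset.card_univ] at this; omega
  obtain ⟨x, hxl⟩ := hx
  -- a cross edge
  have hcross : ∃ a ∈ l, ∃ b, G.Adj a b ∧ b ∉ l := by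
    by_contra hcon
    push_neg at hcon
    have hcl : ∀ ⦃p q : V⦄, p ∈ {y | y ∈ l} → G.Adj p q → q ∈ {y | y ∈ l} := by
      intro p q hp hadj
      by_contra hq
      exact hq (hcon p hp q hadj)
    have hhd : l.head hne ∈ {y | y ∈ l} := List.head_mem hne
    exact hxl (mem_of_reachable hcl hhd (hc.preconnected _ x))
  obtain ⟨a, hal, b, hab, hbl⟩ := hcross
  -- the candidate pivot set
  set n := l.length with hn
  have hnpos : 0 < n := List.length_pos_iff.2 hne
  set F : Finset ℕ := (Finset.range n).filter
    (fun i => ∃ h : i < n, NbrOK G l n (l[i]'h)) with hF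
  have hFne : F.Nonempty := by
    obtain ⟨ia, hia, ha⟩ := List.mem_iff_getElem.1 hal
    refine ⟨ia, Finset.mem_filter.2 ⟨Finset.mem_range.2 hia, hia, b, ?_, ?_⟩⟩
    · rw [ha]; exact hab
    · rw [List.take_length]; exact hbl
  set im := F.max' hFne with him
  have himF : im ∈ (Finset.range n).filter
      (fun i => ∃ h : i < n, NbrOK G l n (l[i]'h)) := F.max'_mem hFne
  rw [Finset.mem_filter, Finset.mem_range] at himF
  obtain ⟨himlt, _, w0, hw0adj, hw0nl⟩ := himF
  rw [List.take_length] at hw0nl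
  refine ⟨w0, hw0nl, ?_, ?_⟩
  · exact (List.nodup_append ..).2 ⟨hnd, List.nodup_singleton _,
      by intro p hp q hq; rw [List.mem_singleton] at hq; subst hq; rintro rfl; exact hw0nl hp⟩
  · intro j hj h0
    have hlen : (l ++ [w0]).length = n + 1 := by simp [hn]
    have htake : ∀ m ≤ n, (l ++ [w0]).take m = l.take m := fun m hm =>
      List.take_append_of_le_length hm
    rcases lt_or_eq_of_le (by omega : j ≤ n) with hjn | hjn
    · obtain ⟨i, hij, hnbr, hmax, hadj⟩ := hstep j hjn h0
      refine ⟨i, hij, ?_, ?_, ?_⟩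
      · rw [nbrOK_congr (htake j (by omega))]
        rw [List.getElem_append_left (by omega)]
        exact hnbr
      · intro i' hi' hnb
        rw [nbrOK_congr (htake j (by omega)), List.getElem_append_left (by omega)] at hnb
        exact hmax i' hi' hnb
      · rw [List.getElem_append_left (by omega), List.getElem_append_left (by omega)]
        exact hadj
    · have htj : List.take j l = l := List.take_of_length_le (by omega)
      refine ⟨im, by omega, ?_, ?_, ?_⟩
      · rw [nbrOK_congr (htake j (le_of_eq hjn)),
          List.getElem_append_left (show im < l.length by omega)]
        exact ⟨w0, hw0adj, by rw [htj]; exact hw0nl⟩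
      · intro i' hi' hnb
        rw [nbrOK_congr (htake j (le_of_eq hjn)),
          List.getElem_append_left (show i' < l.length by omega)] at hnb
        refine F.le_max' i' (Finset.mem_filter.2 ⟨Finset.mem_range.2 (by omega), by omega, ?_⟩)
        convert hnb using 2
        omega
      · rw [List.getElem_append_left (show im < l.length by omega),
          List.getElem_concat_length (l := l) (a := w0) (i := j) (hjn.trans hn)]
        exact hw0adj

/-- greedy extension to a full DFS ordering -/
lemma exists_extend [Fintype V] {G : SimpleGraph V} (hc : G.Connected) (l : List V)
    (hl : IsDFSL G l) (hne : l ≠ []) :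
    ∃ L : List V, IsDFSL G L ∧ l <+: L ∧ L.length = Fintype.card V := by
  classical
  have key : ∀ k, ∀ l : List V, Fintype.card V - l.length ≤ k → IsDFSL G l → l ≠ [] →
      ∃ L : List V, IsDFSL G L ∧ l <+: L ∧ L.length = Fintype.card V := by
    intro k
    induction k with
    | zero =>
      intro l hk hl hne
      have h1 : l.length ≤ Fintype.card V := hl.1.length_le_card
      exact ⟨l, hl, List.prefix_refl l, by omega⟩
    | succ k ih =>
      intro l hk hl hne
      rcases lt_or_ge l.length (Fintype.card V) with hlt | hge
      · obtain ⟨w, hwl, hl'⟩ := exists_step hc hl hne hlt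
        obtain ⟨L, hL, hpre, hlen⟩ := ih (l ++ [w]) (by simp; omega) hl' (by simp)
        exact ⟨L, hL, ((l.prefix_append [w]).trans hpre), hlen⟩
      · have h1 : l.length ≤ Fintype.card V := hl.1.length_le_card
        exact ⟨l, hl, List.prefix_refl l, by omega⟩
  exact key _ l le_rfl hl hne

/-- appending a new neighbor of the maximal branching vertex preserves validity -/
lemma step_append {G : SimpleGraph V} {l : List V} (hl : IsDFSL G l) {i : ℕ}
    (hi : i < l.length)
    (hmax : ∀ i' : ℕ, ∀ h : i' < l.length, NbrOK G l l.length (l[i']'h) → i' ≤ i)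
    {b : V} (hadj : G.Adj (l[i]'hi) b) (hb : b ∉ l) : IsDFSL G (l ++ [b]) := by
  have hnd := hl.1
  have hstep := hl.2
  set n := l.length with hn
  constructor
  · exact (List.nodup_append ..).2 ⟨hnd, List.nodup_singleton _,
      by intro p hp q hq; rw [List.mem_singleton] at hq; subst hq; rintro rfl; exact hb hp⟩
  · intro j hj h0
    have htake : ∀ m ≤ n, (l ++ [b]).take m = l.take m := fun m hm =>
      List.take_append_of_le_length hm
    rcases lt_or_eq_of_le (by simp at hj; omega : j ≤ n) with hjn | hjn
    · obtain ⟨i₂, hij, hnbr, hmax₂, hadj₂⟩ := hstep j hjn h0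
      refine ⟨i₂, hij, ?_, ?_, ?_⟩
      · rw [nbrOK_congr (htake j (by omega)),
          List.getElem_append_left (show i₂ < l.length by omega)]
        exact hnbr
      · intro i' hi' hnb
        rw [nbrOK_congr (htake j (by omega)),
          List.getElem_append_left (show i' < l.length by omega)] at hnb
        exact hmax₂ i' hi' hnb
      · rw [List.getElem_append_left (show i₂ < l.length by omega),
          List.getElem_append_left (show j < l.length by omega)]
        exact hadj₂
    · have htj : List.take j l = l := List.take_of_length_le (by omega)
      refine ⟨i, by omega, ?_, ?_, ?_⟩
      · rw [nbrOK_congr (htake j (le_of_eq hjn)),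
          List.getElem_append_left (show i < l.length by omega)]
        exact ⟨b, hadj, by rw [htj]; exact hb⟩
      · intro i' hi' hnb
        rw [nbrOK_congr (htake j (le_of_eq hjn)),
          List.getElem_append_left (show i' < l.length by omega)] at hnb
        refine hmax i' (by omega) ?_
        convert hnb using 2
        omega
      · rw [List.getElem_append_left (show i < l.length by omega),
          List.getElem_concat_length (l := l) (a := b) (i := j) hjn]
        exact hadj

/-- If `G` is connected and not a path graph from `r`, there are two distinct full DFS
orderings starting at `r`. -/
lemma two_runs [Fintype V] {G : SimpleGraph V} (hc : G.Connected) (r : V)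
    (hnp : ¬ IsPathGraphFrom G r) :
    ∃ L1 L2 : List V, IsDFSL G L1 ∧ IsDFSL G L2 ∧
      L1.length = Fintype.card V ∧ L2.length = Fintype.card V ∧
      L1 ≠ L2 ∧ L1.head? = some r ∧ L2.head? = some r := by
  classical
  have hbase : IsDFSL G [r] := by
    refine ⟨List.nodup_singleton r, ?_⟩
    intro j hj h0
    simp at hj
    omega
  obtain ⟨L1, hL1, hpre1, hlen1⟩ := exists_extend hc [r] hbase (by simp)
  obtain ⟨t1, ht1⟩ : ∃ t, L1 = r :: t := by
    obtain ⟨t, rfl⟩ := hpre1; exact ⟨t, rfl⟩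
  have hhd1 : L1.head? = some r := by rw [ht1]; rfl
  by_cases hbr : ∃ j : ℕ, ∃ hj : j < L1.length, 0 < j ∧ ∃ i : ℕ, ∃ hij : i < j,
      (∀ i' : ℕ, ∀ hi' : i' < j, NbrOK G L1 j (L1[i']'(by omega)) → i' ≤ i) ∧
      ∃ b, G.Adj (L1[i]'(by omega)) b ∧ b ∉ L1.take j ∧ b ≠ L1[j]'hj
  · -- branching: build a second run
    obtain ⟨j, hj, h0, i, hij, hmax, b, hadj, hbtk, hbne⟩ := hbr
    have hlt : (L1.take j).length = j := by simp; omega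
    have hilt : i < (L1.take j).length := by rw [hlt]; omega
    have hP : IsDFSL G (L1.take j ++ [b]) := by
      refine step_append (isDFSL_take hL1 j) hilt ?_ ?_ ?_
      · intro i' hi' hnb
        rw [hlt] at hi' hnb
        refine hmax i' hi' ?_
        rw [← nbrOK_congr (show L1.take j = (L1.take j).take j by
          rw [List.take_take]; simp)] at hnb
        simpa only [List.getElem_take] using hnb
      · show G.Adj ((L1.take j)[i]'hilt) b
        simpa only [List.getElem_take] using hadj
      · intro hmem
        exact hbtk hmem
    obtain ⟨L2, hL2, hpre2, hlen2⟩ := exists_extend hc _ hP (by simp)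
    have hL2j : L2[j]'(by omega) = b := by
      rw [← hpre2.getElem (by simp [hlt])]
      exact List.getElem_concat_length (a := b) (i := j) hlt.symm _
    refine ⟨L1, L2, hL1, hL2, hlen1, hlen2, ?_, hhd1, ?_⟩
    · intro he
      apply hbne
      rw [← hL2j]
      subst he
      rfl
    · have htkj : L1.take j = r :: t1.take (j-1) := by
        rw [ht1]
        cases j with
        | zero => omega
        | succ m => simp
      obtain ⟨t2, rfl⟩ := hpre2
      rw [htkj]
      rfl
  · -- no branching: G is a path from r, contradiction
    exfalso
    push_neg at hbr
    -- pivots are exactly the previous element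
    have key : ∀ j : ℕ, ∀ hj : j < L1.length, 0 < j → ∀ i : ℕ, ∀ hij : i < j,
        NbrOK G L1 j (L1[i]'(by omega)) →
        (∀ i' : ℕ, ∀ hi' : i' < j, NbrOK G L1 j (L1[i']'(by omega)) → i' ≤ i) →
        i = j - 1 := by
      intro j
      induction j using Nat.strong_induction_on with
      | _ j IH =>
        intro hj h0 i hij hnbr hmax
        by_contra hne2
        have hilt : i + 1 < j := by omega
        obtain ⟨i₂, hi₂, hnbr₂, hmax₂, hadj₂⟩ := hL1.2 (i+1) (by omega) (by omega)
        have hi₂e : i₂ = i := by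
          have := IH (i+1) (by omega) (by omega) (by omega) i₂ hi₂ hnbr₂ hmax₂
          omega
        obtain ⟨w, hwadj, hwtk⟩ := hnbr
        have hwadj₂ : G.Adj (L1[i₂]'(by omega)) w := by
          simp only [hi₂e]; exact hwadj
        have hw1 : w ∉ L1.take (i+1+1-1) := by
          intro hmem
          apply hwtk
          rw [mem_take_iff] at hmem ⊢
          obtain ⟨idx, hidx, hidx2, he⟩ := hmem
          exact ⟨idx, hidx, by omega, he⟩
        have hw2 : w = L1[i+1]'(by omega) :=
          hbr (i+1) (by omega) (by omega) i₂ hi₂ hmax₂ w hwadj₂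
            (by simpa using hw1)
        apply hwtk
        rw [hw2, mem_take_iff]
        exact ⟨i+1, by omega, by omega, rfl⟩
    have adj_consec : ∀ j : ℕ, ∀ hj : j < L1.length, 0 < j →
        G.Adj (L1[j-1]'(by omega)) (L1[j]'hj) := by
      intro j hj h0
      obtain ⟨i, hij, hnbr, hmax, hadj⟩ := hL1.2 j hj h0
      have := key j hj h0 i hij hnbr hmax
      subst this
      exact hadj
    have no_far : ∀ a c : ℕ, ∀ ha : a < L1.length, ∀ hcc : c < L1.length,
        a + 1 < c → ¬ G.Adj (L1[a]'ha) (L1[c]'hcc) := by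
      intro a c ha hcc hac hadj
      obtain ⟨i₂, hi₂, hnbr₂, hmax₂, hadj₂⟩ := hL1.2 (a+1) (by omega) (by omega)
      have hi₂e : i₂ = a := by
        have := key (a+1) (by omega) (by omega) i₂ hi₂ hnbr₂ hmax₂
        omega
      have hadj₂' : G.Adj (L1[i₂]'(by omega)) (L1[c]'hcc) := by
        simp only [hi₂e]; exact hadj
      have hbmem : L1[c]'hcc ∉ L1.take (a+1+1-1) := by
        intro hmem
        rw [mem_take_iff] at hmem
        obtain ⟨idx, hidx, hidx2, he⟩ := hmem
        have := (hL1.1.getElem_inj_iff).1 he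
        omega
      have := hbr (a+1) (by omega) (by omega) i₂ hi₂ hmax₂ (L1[c]'hcc)
        hadj₂' (by simpa using hbmem)
      have := (hL1.1.getElem_inj_iff).1 this
      omega
    -- every vertex appears
    have hsurj : ∀ a : V, ∃ idx : ℕ, ∃ h : idx < L1.length, L1[idx] = a := by
      intro a
      rw [← List.mem_iff_getElem]
      have : L1.toFinset = Finset.univ :=
        Finset.eq_univ_of_card _ (by rw [List.toFinset_card_of_nodup hL1.1, hlen1])
      rw [← List.mem_toFinset, this]
      exact Finset.mem_univ a
    apply hnp
    refine ⟨L1.length, fun i : Fin L1.length => L1[(i : ℕ)], ?_, ?_, ?_⟩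
    · rw [Fintype.bijective_iff_injective_and_card]
      constructor
      · intro i1 i2 he
        exact Fin.ext ((hL1.1.getElem_inj_iff).1 he)
      · simp [hlen1]
    · intro i hi
      rcases i with ⟨iv, hiv⟩
      simp only at hi
      subst hi
      simp [ht1]
    · intro a b
      constructor
      · intro hadj
        obtain ⟨ia, hia, rfl⟩ := hsurj a
        obtain ⟨ib, hib, rfl⟩ := hsurj b
        have hne3 : ia ≠ ib := by
          intro he; subst he; exact G.irrefl hadj
        rcases lt_or_gt_of_ne hne3 with hlt2 | hlt2
        · have : ib = ia + 1 := by
            by_contra hne4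
            exact no_far ia ib hia hib (by omega) hadj
          subst this
          exact ⟨⟨ia, by omega⟩, by simpa using hib, Or.inl ⟨rfl, rfl⟩⟩
        · have : ia = ib + 1 := by
            by_contra hne4
            exact no_far ib ia hib hia (by omega) hadj.symm
          subst this
          exact ⟨⟨ib, by omega⟩, by simpa using hia, Or.inr ⟨rfl, rfl⟩⟩
      · rintro ⟨jf, hjf, h | h⟩
        · obtain ⟨h1, h2⟩ := h
          subst h1; subst h2
          have := adj_consec (jf+1) (by omega) (by omega)
          simpa using this
        · obtain ⟨h1, h2⟩ := h
          subst h1; subst h2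
          have := adj_consec (jf+1) (by omega) (by omega)
          exact (by simpa using this : G.Adj _ _).symm

/-- Splicing a DFS of `G[S]` (from `u`) into a DFS of `G[T]` (from `v`) right after `v`. -/
lemma splice {G : SimpleGraph V} {u v : V} {S T : Set V}
    (huv : G.Adj u v) (hu : u ∈ S) (hv : v ∈ T)
    (hcompl : ∀ x, x ∈ T ↔ x ∉ S)
    (hedgeS : ∀ x, x ∈ S → ∀ y, G.Adj x y → y ∈ S ∨ (x = u ∧ y = v))
    (hedgeT : ∀ x, x ∈ T → ∀ y, G.Adj x y → y ∈ T ∨ (x = v ∧ y = u))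
    {sR : List ↥S} (hs : IsDFSL (G.induce S) sR)
    (hsfull : ∀ x, x ∈ S → x ∈ sR.map Subtype.val)
    (hshead : ∃ s0, sR = ⟨u, hu⟩ :: s0)
    {tR : List ↥T} (ht : IsDFSL (G.induce T) tR)
    (hthead : ∃ t0, tR = ⟨v, hv⟩ :: t0) :
    IsDFSL G (v :: (sR.map Subtype.val ++ (tR.map Subtype.val).tail)) := by
  classical
  obtain ⟨t0, rfl⟩ := hthead
  set sL : List V := sR.map Subtype.val with hsL
  set tT : List V := t0.map Subtype.val with htT
  have htail : ((((⟨v, hv⟩ : ↥T) :: t0).map Subtype.val).tail) = tT := by simp [htT]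
  rw [htail]
  set l : List V := v :: (sL ++ tT) with hldef
  set ns : ℕ := sL.length with hns
  set nt : ℕ := tT.length with hnt
  have hnss : sR.length = ns := by rw [hns, hsL, List.length_map]
  have hntt : t0.length = nt := by rw [hnt, htT, List.length_map]
  have hllen : l.length = 1 + ns + nt := by simp [hldef]; omega
  have hmemS : ∀ x, x ∈ sL → x ∈ S := by
    intro x hx; rw [hsL, List.mem_map] at hx; obtain ⟨y, _, rfl⟩ := hx; exact y.2
  have hmemT : ∀ x, x ∈ tT → x ∈ T := by
    intro x hx; rw [htT, List.mem_map] at hx; obtain ⟨y, _, rfl⟩ := hx; exact y.2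
  have hvS : v ∉ S := (hcompl v).1 hv
  have huT : u ∉ T := fun h => (hcompl u).1 h hu
  -- getElem facts
  have hget0 : ∀ h : 0 < l.length, l[0]'h = v := fun _ => rfl
  have hgetS : ∀ k, ∀ h : k < ns, ∀ hh : k + 1 < l.length,
      l[k+1]'hh = (sR[k]'(by omega)).val := by
    intro k h hh
    have h2 : k < (sL ++ tT).length := by simp [hllen] at hh ⊢; omega
    have e1 : l[k+1]'hh = (sL ++ tT)[k]'h2 := List.getElem_cons_succ v (sL ++ tT) k hh
    rw [e1, List.getElem_append_left (show k < sL.length by omega)]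
    simp only [hsL, List.getElem_map]
  have hgetT : ∀ m, ∀ h : m < nt, ∀ hh : ns + m + 1 < l.length,
      l[ns+m+1]'hh = (t0[m]'(by omega)).val := by
    intro m h hh
    have h2 : ns + m < (sL ++ tT).length := by simp [hllen] at hh ⊢; omega
    have e1 : l[ns+m+1]'hh = (sL ++ tT)[ns+m]'h2 :=
      List.getElem_cons_succ v (sL ++ tT) (ns+m) hh
    rw [e1, List.getElem_append_right (show sL.length ≤ ns + m by omega)]
    have e2 : ns + m - sL.length = m := by omega
    simp only [e2]
    simp only [htT, List.getElem_map]
  -- take facts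
  have htake1 : ∀ j, 1 ≤ j → j ≤ ns + 1 → l.take j = v :: sL.take (j-1) := by
    intro j h1 h2
    obtain ⟨m, rfl⟩ : ∃ m, j = m + 1 := ⟨j - 1, by omega⟩
    rw [hldef, List.take_succ_cons, List.take_append_of_le_length (by omega)]
    simp
  have htake2 : ∀ m, l.take (ns + 1 + m) = v :: (sL ++ tT.take m) := by
    intro m
    have : ns + 1 + m = (ns + m) + 1 := by omega
    rw [this, hldef, List.take_succ_cons]
    have : ns + m = sL.length + m := by omega
    rw [this, List.take_append]
    simp
  -- transfer (1)
  have h1 : ∀ j, 1 ≤ j → j ≤ ns + 1 → ∀ a : ↥S,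
      (NbrOK G l j a.val ↔ NbrOK (G.induce S) sR (j-1) a) := by
    intro j hj1 hj2 a
    constructor
    · rintro ⟨w, hadjw, hwn⟩
      rw [htake1 j hj1 hj2] at hwn
      have hwv : w ≠ v := fun he => hwn (he ▸ List.mem_cons_self)
      have hwS : w ∈ S := by
        rcases hedgeS a.val a.2 w hadjw with h | ⟨_, h⟩
        · exact h
        · exact absurd h hwv
      refine ⟨⟨w, hwS⟩, ?_, ?_⟩
      · exact SimpleGraph.comap_adj.2 hadjw
      · intro hmem
        apply hwn
        apply List.mem_cons_of_mem
        have : (⟨w, hwS⟩ : ↥S).val ∈ (sR.take (j-1)).map Subtype.val :=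
          List.mem_map_of_mem hmem
        rwa [List.map_take] at this
    · rintro ⟨wS, hadjw, hwn⟩
      refine ⟨wS.val, SimpleGraph.comap_adj.1 hadjw, ?_⟩
      rw [htake1 j hj1 hj2]
      intro hmem
      rcases List.mem_cons.1 hmem with he | hmem2
      · exact hvS (he ▸ wS.2)
      · apply hwn
        rw [← List.map_take] at hmem2
        obtain ⟨y, hy, hye⟩ := List.mem_map.1 hmem2
        rwa [show y = wS from Subtype.ext hye] at hy
  -- transfer (2a)
  have h2a : ∀ m, 1 ≤ m → ∀ x, x ∈ S → ¬ NbrOK G l (ns + m) x := by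
    rintro m hm x hx ⟨w, hadjw, hwn⟩
    rw [show ns + m = ns + 1 + (m - 1) by omega, htake2 (m-1)] at hwn
    rcases hedgeS x hx w hadjw with h | ⟨_, h⟩
    · exact hwn (List.mem_cons_of_mem _ (List.mem_append_left _ (hsfull w h)))
    · exact hwn (h ▸ List.mem_cons_self)
  -- transfer (2b)
  have h2b : ∀ m, 1 ≤ m → ∀ a : ↥T,
      (NbrOK G l (ns + m) a.val ↔ NbrOK (G.induce T) (⟨v, hv⟩ :: t0) m a) := by
    intro m hm a
    have hvm : (⟨v, hv⟩ : ↥T) ∈ (⟨v, hv⟩ :: t0).take m := by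
      obtain ⟨m', rfl⟩ : ∃ m', m = m' + 1 := ⟨m - 1, by omega⟩
      rw [List.take_succ_cons]
      exact List.mem_cons_self
    have hteq : ns + m = ns + 1 + (m - 1) := by omega
    have htk : l.take (ns + m) = v :: (sL ++ tT.take (m-1)) := by
      rw [hteq, htake2]
    have htkr : ((⟨v, hv⟩ : ↥T) :: t0).take m = ⟨v, hv⟩ :: t0.take (m-1) := by
      obtain ⟨m', rfl⟩ : ∃ m', m = m' + 1 := ⟨m - 1, by omega⟩
      rw [List.take_succ_cons]
      simp
    constructor
    · rintro ⟨w, hadjw, hwn⟩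
      rw [htk] at hwn
      have hwT : w ∈ T := by
        rcases hedgeT a.val a.2 w hadjw with h | ⟨_, h⟩
        · exact h
        · exfalso
          exact hwn (List.mem_cons_of_mem _ (List.mem_append_left _ (hsfull w (h ▸ hu))))
      refine ⟨⟨w, hwT⟩, SimpleGraph.comap_adj.2 hadjw, ?_⟩
      rw [htkr]
      intro hmem
      rcases List.mem_cons.1 hmem with he | hmem2
      · have : w = v := congrArg Subtype.val he
        exact hwn (this ▸ List.mem_cons_self)
      · apply hwn
        apply List.mem_cons_of_mem
        apply List.mem_append_right
        have : (⟨w, hwT⟩ : ↥T).val ∈ (t0.take (m-1)).map Subtype.val :=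
          List.mem_map_of_mem hmem2
        rwa [List.map_take] at this
    · rintro ⟨wT, hadjw, hwn⟩
      refine ⟨wT.val, SimpleGraph.comap_adj.1 hadjw, ?_⟩
      rw [htk]
      intro hmem
      rcases List.mem_cons.1 hmem with he | hmem2
      · apply hwn
        rw [htkr]
        rw [show wT = ⟨v, hv⟩ from Subtype.ext he]
        exact List.mem_cons_self
      · rcases List.mem_append.1 hmem2 with h | h
        · exact (hcompl wT.val).1 wT.2 (hmemS _ h)
        · apply hwn
          rw [htkr]
          apply List.mem_cons_of_mem
          rw [← List.map_take] at h
          obtain ⟨y, hy, hye⟩ := List.mem_map.1 h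
          rwa [show y = wT from Subtype.ext hye] at hy
  -- assemble
  obtain ⟨s0, hs0⟩ := hshead
  have hns1 : 1 ≤ ns := by rw [← hnss, hs0]; simp
  constructor
  · -- nodup
    have hndS : sL.Nodup := hs.1.map Subtype.val_injective
    have hndT : (v :: tT).Nodup := by
      have := ht.1.map (Subtype.val_injective (p := (· ∈ T)))
      simpa only [List.map_cons, htT] using this
    rw [hldef, List.nodup_cons, List.nodup_append]
    refine ⟨?_, hndS, (List.nodup_cons.1 hndT).2, ?_⟩
    · intro hmem
      rcases List.mem_append.1 hmem with h | h
      · exact hvS (hmemS v h)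
      · exact (List.nodup_cons.1 hndT).1 h
    · rintro x hxs _ hxt rfl
      exact (hcompl x).1 (hmemT x hxt) (hmemS x hxs)
  · intro j hj h0
    rcases le_or_gt j ns with hjns | hjns
    · -- S phase
      obtain ⟨k, rfl⟩ : ∃ k, j = k + 1 := ⟨j - 1, by omega⟩
      rcases Nat.eq_zero_or_pos k with rfl | hk0
      · -- j = 1
        refine ⟨0, by omega, ⟨u, huv.symm, ?_⟩, fun i' hi' _ => by omega, ?_⟩
        · intro hmem
          rw [htake1 1 le_rfl (by omega)] at hmem
          have : u = v := by simpa using hmem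
          exact (G.ne_of_adj huv) this
        · rw [hget0, hgetS 0 (by omega) hj]
          have : (sR[0]'(by rw [hs0]; simp)).val = u := by
            simp only [hs0, List.getElem_cons_zero]
          rw [this]
          exact huv.symm
      · -- 2 ≤ j = k+1 ≤ ns
        obtain ⟨iS, hiS, hnbrS, hmaxS, hadjS⟩ := hs.2 k (by omega) hk0
        refine ⟨iS + 1, by omega, ?_, ?_, ?_⟩
        · rw [hgetS iS (by omega) (by omega)]
          refine (h1 (k+1) (by omega) (by omega) _).2 ?_
          simpa only [Nat.add_sub_cancel] using hnbrS
        · intro i' hi' hnb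
          rcases Nat.eq_zero_or_pos i' with rfl | hi'0
          · omega
          obtain ⟨k', rfl⟩ : ∃ k', i' = k' + 1 := ⟨i' - 1, by omega⟩
          rw [hgetS k' (by omega) (by omega)] at hnb
          have := hmaxS k' (by omega)
            (by simpa only [Nat.add_sub_cancel] using
              (h1 (k+1) (by omega) (by omega) _).1 hnb)
          omega
        · rw [hgetS iS (by omega) (by omega), hgetS k (by omega) hj]
          exact SimpleGraph.comap_adj.1 hadjS
    · -- T phase
      obtain ⟨m, rfl⟩ : ∃ m, j = ns + m := ⟨j - ns, by omega⟩
      have hm1 : 1 ≤ m := by omega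
      have hmnt : m ≤ nt := by rw [hllen] at hj; omega
      obtain ⟨iT, hiT, hnbrT, hmaxT, hadjT⟩ := ht.2 m (by simp [hntt]; omega) (by omega)
      obtain ⟨k2, rfl⟩ : ∃ k2, m = k2 + 1 := ⟨m - 1, by omega⟩
      have hjform : ns + (k2 + 1) = ns + k2 + 1 := by omega
      have hgetj : l[ns + (k2+1)]'hj = (t0[k2]'(by omega)).val := by
        have := hgetT k2 (by omega) (by omega)
        simpa only [← hjform] using this
      have hmaxgen : ∀ i' : ℕ, ∀ hi' : i' < ns + (k2+1),
          NbrOK G l (ns + (k2+1)) (l[i']'(by omega)) → i' ≤ if iT = 0 then 0 else ns + iT := by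
        intro i' hi' hnb
        rcases Nat.eq_zero_or_pos i' with rfl | hi'0
        · split <;> omega
        rcases le_or_gt i' ns with hi'ns | hi'ns
        · obtain ⟨k', rfl⟩ : ∃ k', i' = k' + 1 := ⟨i' - 1, by omega⟩
          rw [hgetS k' (by omega) (by omega)] at hnb
          exact absurd hnb (h2a (k2+1) (by omega) _ (sR[k']'(by omega)).2)
        · obtain ⟨k', rfl⟩ : ∃ k', i' = ns + k' + 1 := ⟨i' - ns - 1, by omega⟩
          rw [hgetT k' (by omega) (by omega)] at hnb
          have h2 := (h2b (k2+1) (by omega) _).1 hnb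
          have h3 : NbrOK (G.induce T) (⟨v, hv⟩ :: t0) (k2+1)
              (((⟨v, hv⟩ : ↥T) :: t0)[k'+1]'(by simp [hntt]; omega)) := by
            simpa only [List.getElem_cons_succ] using h2
          have := hmaxT (k'+1) (by omega) h3
          split <;> omega
      rcases Nat.eq_zero_or_pos iT with rfl | hiT0
      · refine ⟨0, by omega, ?_, ?_, ?_⟩
        · show NbrOK G l (ns + (k2+1)) v
          refine (h2b (k2+1) (by omega) ⟨v, hv⟩).2 ?_
          simpa only [List.getElem_cons_zero] using hnbrT
        · intro i' hi' hnb
          have := hmaxgen i' hi' hnb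
          simpa using this
        · rw [hget0, hgetj]
          have := SimpleGraph.comap_adj.1 hadjT
          simpa only [List.getElem_cons_zero, List.getElem_cons_succ, Function.Embedding.coe_subtype] using this
      · obtain ⟨k3, rfl⟩ : ∃ k3, iT = k3 + 1 := ⟨iT - 1, by omega⟩
        refine ⟨ns + k3 + 1, by omega, ?_, ?_, ?_⟩
        · rw [hgetT k3 (by omega) (by omega)]
          refine (h2b (k2+1) (by omega) _).2 ?_
          simpa only [List.getElem_cons_succ] using hnbrT
        · intro i' hi' hnb
          have := hmaxgen i' hi' hnb
          simp only [Nat.succ_ne_zero, if_false] at this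
          omega
        · rw [hgetT k3 (by omega) (by omega), hgetj]
          have := SimpleGraph.comap_adj.1 hadjT
          simpa only [List.getElem_cons_succ, Function.Embedding.coe_subtype] using this

lemma isDFSOrder_of_isDFSL [Fintype V] {G : SimpleGraph V} {l : List V}
    (hl : IsDFSL G l) (hlen : l.length = Fintype.card V) :
    IsDFSOrder G (fun i : Fin (Fintype.card V) => l[(i : ℕ)]'(by omega)) := by
  set f : Fin (Fintype.card V) → V := fun i => l[(i : ℕ)]'(by omega) with hf
  have hconv : ∀ (k : ℕ) (hk : k < l.length) (jj : ℕ),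
      HasNewNbr G f jj ⟨k, by omega⟩ ↔ NbrOK G l jj (l[k]'hk) := by
    intro k hk jj
    constructor
    · rintro ⟨w, hadj, hnot⟩
      refine ⟨w, hadj, fun hmem => ?_⟩
      rw [mem_take_iff] at hmem
      obtain ⟨idx, hidx, hidxj, he⟩ := hmem
      exact hnot ⟨idx, by omega⟩ hidxj he
    · rintro ⟨w, hadj, hnot⟩
      refine ⟨w, hadj, fun i' hi' he => ?_⟩
      exact hnot (mem_take_iff.2 ⟨(i' : ℕ), by omega, hi', he⟩)
  constructor
  · rw [Fintype.bijective_iff_injective_and_card]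
    refine ⟨?_, by simp⟩
    intro i1 i2 he
    exact Fin.ext ((hl.1.getElem_inj_iff).1 he)
  · intro j h0
    obtain ⟨i, hij, hnbr, hmax, hadj⟩ := hl.2 (j : ℕ) (by omega) h0
    refine ⟨⟨i, by omega⟩, hij, ?_, ?_, ?_⟩
    · exact (hconv i (by omega) (j : ℕ)).2 hnbr
    · intro i' hi' hnb
      refine hmax (i' : ℕ) hi' ?_
      have : i' = ⟨(i' : ℕ), by omega⟩ := by ext; rfl
      rw [this] at hnb
      exact (hconv (i' : ℕ) (by omega) (j : ℕ)).1 hnb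
    · exact hadj

end DFSList


lemma getElem_spliced {V : Type*} (v : V) (sl tt : List V) (k : ℕ) (hk : k < tt.length)
    (hh : sl.length + k + 1 < (v :: (sl ++ tt)).length) :
    (v :: (sl ++ tt))[sl.length + k + 1]'hh = tt[k]'hk := by
  have h2 : sl.length + k < (sl ++ tt).length := by simp; omega
  have e1 : (v :: (sl ++ tt))[sl.length + k + 1]'hh = (sl ++ tt)[sl.length + k]'h2 :=
    List.getElem_cons_succ v (sl ++ tt) (sl.length + k) hh
  rw [e1, List.getElem_append_right (show sl.length ≤ sl.length + k by omega)]
  have e2 : sl.length + k - sl.length = k := by omega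
  simp only [e2]

/-- Let `{u, v}` be a bridge of a connected graph `G`, `S` the component of
`u` after deleting the bridge, `T = Sᶜ` with `|T| ≥ 2`. If `G[S]` is not a path graph with
endpoint `u`, then `G` admits two distinct valid DFS orderings with the same start vertex and
the same end vertex. -/
theorem stmt_10 {V : Type*} [Fintype V] (G : SimpleGraph V) (hG : G.Connected)
    (u v : V) (hbr : G.IsBridge s(u, v))
    (S : Set V) (hS : S = {x : V | (G.deleteEdges {s(u, v)}).Reachable u x})
    (hu : u ∈ S)
    (T : Set V) (hT : T = Sᶜ) (hT2 : 2 ≤ T.ncard)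
    (hnotpath : ¬ IsPathGraphFrom (G.induce S) ⟨u, hu⟩) :
    ∃ g1 g2 : Fin (Fintype.card V) → V,
      IsDFSOrder G g1 ∧ IsDFSOrder G g2 ∧ g1 ≠ g2 ∧
      (∀ i : Fin (Fintype.card V), (i : ℕ) = 0 → g1 i = g2 i) ∧
      (∀ i : Fin (Fintype.card V), (i : ℕ) = Fintype.card V - 1 → g1 i = g2 i) := by
  classical
  have hnr0 := SimpleGraph.isBridge_iff.1 hbr
  have huvadj : G.Adj u v := hbr.reachable_iff_adj.1 (hG.preconnected u v)
  set G' := G.deleteEdges {s(u, v)} with hG'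
  have hGeq : G' = G \ SimpleGraph.fromEdgeSet {s(u, v)} := by
    rw [hG']
    ext a b
    rw [SimpleGraph.deleteEdges_adj, SimpleGraph.sdiff_adj, SimpleGraph.fromEdgeSet_adj]
    constructor
    · rintro ⟨h1, h2⟩; exact ⟨h1, fun hm => h2 hm.1⟩
    · rintro ⟨h1, h2⟩; exact ⟨h1, fun hm => h2 ⟨hm, G.ne_of_adj h1⟩⟩
  have hnr : ¬ G'.Reachable u v := by exact hnr0
  have hG'le : ∀ {a b : V}, G'.Adj a b → G.Adj a b := by
    intro a b h; exact (SimpleGraph.deleteEdges_adj.1 h).1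
  have hSdef : ∀ x, x ∈ S ↔ G'.Reachable u x := fun x => by rw [hS]; exact Iff.rfl
  have hvS : v ∉ S := fun h => hnr ((hSdef v).1 h)
  have hST : ∀ x, x ∈ T ↔ x ∉ S := fun x => by rw [hT]; exact Iff.rfl
  have hvT : v ∈ T := (hST v).2 hvS
  have huT : u ∉ T := fun h => (hST u).1 h hu
  have hdich : ∀ x, G'.Reachable u x ∨ G'.Reachable v x := by
    intro x
    refine mem_of_reachable (R := {y | G'.Reachable u y ∨ G'.Reachable v y}) ?_
      (Or.inl (SimpleGraph.Reachable.refl u)) (hG.preconnected u x)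
    intro p q hp hpq
    by_cases he : s(p, q) = s(u, v)
    · rcases Sym2.eq_iff.1 he with ⟨rfl, rfl⟩ | ⟨rfl, rfl⟩
      · exact Or.inr (SimpleGraph.Reachable.refl _)
      · exact Or.inl (SimpleGraph.Reachable.refl _)
    · have hadj' : G'.Adj p q := SimpleGraph.deleteEdges_adj.2 ⟨hpq, by simpa using he⟩
      rcases hp with h | h
      · exact Or.inl (h.trans hadj'.reachable)
      · exact Or.inr (h.trans hadj'.reachable)
  have hSreach : ∀ x ∈ S, G'.Reachable u x := fun x hx => (hSdef x).1 hx
  have hedgeS : ∀ x, x ∈ S → ∀ y, G.Adj x y → y ∈ S ∨ (x = u ∧ y = v) := by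
    intro x hx y hxy
    by_cases he : s(x, y) = s(u, v)
    · rcases Sym2.eq_iff.1 he with ⟨rfl, rfl⟩ | ⟨rfl, rfl⟩
      · exact Or.inr ⟨rfl, rfl⟩
      · exact absurd hx hvS
    · have hadj' : G'.Adj x y := SimpleGraph.deleteEdges_adj.2 ⟨hxy, by simpa using he⟩
      exact Or.inl ((hSdef y).2 ((hSreach x hx).trans hadj'.reachable))
  have hedgeT : ∀ x, x ∈ T → ∀ y, G.Adj x y → y ∈ T ∨ (x = v ∧ y = u) := by
    intro x hx y hxy
    by_cases he : s(x, y) = s(u, v)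
    · rcases Sym2.eq_iff.1 he with ⟨rfl, rfl⟩ | ⟨rfl, rfl⟩
      · exact absurd hx huT
      · exact Or.inr ⟨rfl, rfl⟩
    · have hadj' : G'.Adj x y := SimpleGraph.deleteEdges_adj.2 ⟨hxy, by simpa using he⟩
      refine Or.inl ((hST y).2 ?_)
      intro hyS
      exact (hST x).1 hx ((hSdef x).2 ((hSreach y hyS).trans hadj'.symm.reachable))
  haveI : Fintype ↥S := Fintype.ofFinite _
  haveI : Fintype ↥T := Fintype.ofFinite _
  -- connectivity of the induced graphs
  have hallS : ∀ z, ∀ hz : z ∈ S, (G.induce S).Reachable ⟨u, hu⟩ ⟨z, hz⟩ := by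
    intro z hz
    have hmem : z ∈ {y | ∃ hy : y ∈ S, (G.induce S).Reachable ⟨u, hu⟩ ⟨y, hy⟩} := by
      refine mem_of_reachable (G := G') ?_ ⟨hu, SimpleGraph.Reachable.refl _⟩ (hSreach z hz)
      rintro p q ⟨hpS, hpr⟩ hpq
      have hqS : q ∈ S := (hSdef q).2 ((hSreach p hpS).trans hpq.reachable)
      exact ⟨hqS, hpr.trans (SimpleGraph.Adj.reachable
        (SimpleGraph.comap_adj.2 (hG'le hpq)))⟩
    obtain ⟨hz', hr⟩ := hmem
    exact hr
  have hconnS : (G.induce S).Connected := by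
    haveI : Nonempty ↥S := ⟨⟨u, hu⟩⟩
    exact SimpleGraph.Connected.mk
      (fun x y => (hallS x.1 x.2).symm.trans (hallS y.1 y.2))
  have hTreach : ∀ x ∈ T, G'.Reachable v x := fun x hx =>
    (hdich x).resolve_left (fun h => (hST x).1 hx ((hSdef x).2 h))
  have hallT : ∀ z, ∀ hz : z ∈ T, (G.induce T).Reachable ⟨v, hvT⟩ ⟨z, hz⟩ := by
    intro z hz
    have hmem : z ∈ {y | ∃ hy : y ∈ T, (G.induce T).Reachable ⟨v, hvT⟩ ⟨y, hy⟩} := by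
      refine mem_of_reachable (G := G') ?_ ⟨hvT, SimpleGraph.Reachable.refl _⟩ (hTreach z hz)
      rintro p q ⟨hpT, hpr⟩ hpq
      have hqT : q ∈ T := (hST q).2 (fun hqS =>
        (hST p).1 hpT ((hSdef p).2 ((hSreach q hqS).trans hpq.symm.reachable)))
      exact ⟨hqT, hpr.trans (SimpleGraph.Adj.reachable
        (SimpleGraph.comap_adj.2 (hG'le hpq)))⟩
    obtain ⟨hz', hr⟩ := hmem
    exact hr
  have hconnT : (G.induce T).Connected := by
    haveI : Nonempty ↥T := ⟨⟨v, hvT⟩⟩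
    exact SimpleGraph.Connected.mk
      (fun x y => (hallT x.1 x.2).symm.trans (hallT y.1 y.2))
  -- two runs on S, one run on T
  obtain ⟨sR1, sR2, hs1, hs2, hsl1, hsl2, hsne, hsh1, hsh2⟩ :=
    two_runs hconnS ⟨u, hu⟩ hnotpath
  have hbaseT : IsDFSL (G.induce T) [⟨v, hvT⟩] := by
    refine ⟨List.nodup_singleton _, ?_⟩
    intro j hj h0
    simp at hj
    omega
  obtain ⟨tR, htR, htpre, htlen⟩ := exists_extend hconnT [⟨v, hvT⟩] hbaseT (by simp)
  obtain ⟨t0, ht0⟩ : ∃ t0, tR = ⟨v, hvT⟩ :: t0 := by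
    obtain ⟨t, rfl⟩ := htpre; exact ⟨t, rfl⟩
  have hs1h : ∃ s0, sR1 = ⟨u, hu⟩ :: s0 := by
    cases sR1 with
    | nil => simp at hsh1
    | cons a t => exact ⟨t, by simp at hsh1; rw [hsh1]⟩
  have hs2h : ∃ s0, sR2 = ⟨u, hu⟩ :: s0 := by
    cases sR2 with
    | nil => simp at hsh2
    | cons a t => exact ⟨t, by simp at hsh2; rw [hsh2]⟩
  have hsfull : ∀ (sR : List ↥S), IsDFSL (G.induce S) sR → sR.length = Fintype.card ↥S →
      ∀ x, x ∈ S → x ∈ sR.map Subtype.val := by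
    intro sR hdfs hlen x hx
    have h1 : sR.toFinset = Finset.univ :=
      Finset.eq_univ_of_card _ (by rw [List.toFinset_card_of_nodup hdfs.1, hlen])
    have h2 : (⟨x, hx⟩ : ↥S) ∈ sR := by
      rw [← List.mem_toFinset, h1]; exact Finset.mem_univ _
    exact List.mem_map_of_mem h2
  have hd1 := splice huvadj hu hvT hST hedgeS hedgeT hs1 (hsfull sR1 hs1 hsl1) hs1h htR ⟨t0, ht0⟩
  have hd2 := splice huvadj hu hvT hST hedgeS hedgeT hs2 (hsfull sR2 hs2 hsl2) hs2h htR ⟨t0, ht0⟩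
  set l1 : List V := v :: (sR1.map Subtype.val ++ (tR.map Subtype.val).tail) with hl1
  set l2 : List V := v :: (sR2.map Subtype.val ++ (tR.map Subtype.val).tail) with hl2
  -- cardinalities
  have hcardST : Fintype.card ↥S + Fintype.card ↥T = Fintype.card V := by
    have hTS : T.toFinset = S.toFinsetᶜ := by
      ext x
      simp [Set.mem_toFinset, hST x]
    have hcc := Finset.card_add_card_compl S.toFinset
    rw [← hTS] at hcc
    rw [← Set.toFinset_card, ← Set.toFinset_card]
    exact hcc
  have hT2' : 2 ≤ Fintype.card ↥T := by
    rw [Set.ncard_eq_toFinset_card', Set.toFinset_card] at hT2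
    exact hT2
  have htt : (tR.map Subtype.val).tail.length = Fintype.card ↥T - 1 := by
    rw [ht0]
    simp only [List.map_cons, List.tail_cons, List.length_map]
    rw [ht0] at htlen
    simp only [List.length_cons] at htlen
    omega
  have hlen1 : l1.length = Fintype.card V := by
    rw [hl1]
    simp only [List.length_cons, List.length_append, List.length_map, htt, hsl1]
    omega
  have hlen2 : l2.length = Fintype.card V := by
    rw [hl2]
    simp only [List.length_cons, List.length_append, List.length_map, htt, hsl2]
    omega
  refine ⟨_, _, isDFSOrder_of_isDFSL hd1 hlen1, isDFSOrder_of_isDFSL hd2 hlen2, ?_, ?_, ?_⟩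
  · -- distinct
    intro he
    have hl12 : l1 = l2 := by
      refine List.ext_getElem (by rw [hlen1, hlen2]) ?_
      intro n h1 h2
      have := congrFun he ⟨n, by omega⟩
      exact this
    rw [hl1, hl2] at hl12
    have := List.append_cancel_right (List.cons.inj hl12).2
    exact hsne (List.map_injective_iff.2 Subtype.val_injective this)
  · -- same start
    intro i hi
    simp only [hi]
    rfl
  · -- same end
    intro i hi
    simp only [hi]
    have hnt1 : 1 ≤ (tR.map Subtype.val).tail.length := by omega
    have e1 : Fintype.card V - 1 =
        Fintype.card ↥S + ((tR.map Subtype.val).tail.length - 1) + 1 := by omega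
    simp only [e1]
    have r1 := getElem_spliced v (sR1.map Subtype.val) (tR.map Subtype.val).tail
      ((tR.map Subtype.val).tail.length - 1) (by omega)
      (by simp only [List.length_cons, List.length_append, List.length_map, hsl1]; omega)
    have r2 := getElem_spliced v (sR2.map Subtype.val) (tR.map Subtype.val).tail
      ((tR.map Subtype.val).tail.length - 1) (by omega)
      (by simp only [List.length_cons, List.length_append, List.length_map, hsl2]; omega)
    simp only [List.length_map, hsl1] at r1
    simp only [List.length_map, hsl2] at r2
    rw [r1, r2]
end
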